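/- arXiv:2301.00105 — 11 statements merged into one kernel-verified Lean document; each statement's English description precedes it below -/
import Mathlib

section
/- Let C be a real number minimizing c ↦ E[L(Z + c)]. Then Var[L(Z + C)] = Var[L(Z)] holds if and only if C = 0, which in turn holds if and only if k₁ = k₂. -/
/-!
At a minimizer `C` the first-order condition `k₁ P(Z > -C) = k₂ P(Z < -C)` fixes the tail mass
`P(Z > -C) = k₂ / (k₁ + k₂)`. Tails of a symmetric density that decreases on `[0, ∞)` are strictly
decreasing with value `1/2` at `0`, so `C = 0` exactly when `k₁ = k₂`; otherwise, after the
reflection `z ↦ -z` (which swaps `k₁` and `k₂`), `C = -t` with `t > 0`.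

Folding the integrals at `0` writes both variances through the partial moments `I, S, Q` of
orders `0, 1, 2` of `f` on `(0, t]` and `G, T` of orders `0, 1` on `(t, ∞)`. With the first-order
condition, the drop of the variance is a positive multiple of
`Δ = 2IQ + 4ItT - t²G(G + 2I) - S² - 2ST`, and `Δ ≥ IQ > 0` follows from Cauchy–Schwarz
`S² ≤ IQ`, from `S ≤ tI`, and from the bathtub bound `tG² ≤ 2I(T - tG)`, which holds because
`f ≤ f t` on `(t, ∞)` and `f ≥ f t` on `(0, t]`.
-/

open MeasureTheory ProbabilityTheory Set Filter Topology

namespace AsymmetricLoss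

noncomputable def linLinLoss (k₁ k₂ z : ℝ) : ℝ := if 0 ≤ z then k₁ * z else -k₂ * z

section Loss

variable {k₁ k₂ : ℝ}

lemma linLinLoss_of_nonneg {z : ℝ} (hz : 0 ≤ z) : linLinLoss k₁ k₂ z = k₁ * z := if_pos hz

lemma linLinLoss_of_nonpos {z : ℝ} (hz : z ≤ 0) : linLinLoss k₁ k₂ z = -k₂ * z := by
  rcases hz.lt_or_eq with hz | rfl
  · exact if_neg hz.not_ge
  · simp [linLinLoss]

lemma linLinLoss_neg (z : ℝ) : linLinLoss k₁ k₂ (-z) = linLinLoss k₂ k₁ z := by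
  rcases le_total 0 z with hz | hz
  · rw [linLinLoss_of_nonpos (neg_nonpos.2 hz), linLinLoss_of_nonneg hz]; ring
  · rw [linLinLoss_of_nonneg (neg_nonneg.2 hz), linLinLoss_of_nonpos hz]; ring

lemma linLinLoss_eq_max (hk₁ : 0 ≤ k₁) (hk₂ : 0 ≤ k₂) (z : ℝ) :
    linLinLoss k₁ k₂ z = max (k₁ * z) (-k₂ * z) := by
  rcases le_total 0 z with hz | hz
  · rw [linLinLoss_of_nonneg hz, max_eq_left (by nlinarith)]
  · rw [linLinLoss_of_nonpos hz, max_eq_right (by nlinarith)]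

lemma measurable_linLinLoss : Measurable (linLinLoss k₁ k₂) :=
  Measurable.ite measurableSet_Ici (measurable_id.const_mul _) (measurable_id.const_mul _)

lemma abs_linLinLoss_sub_le (hk₁ : 0 ≤ k₁) (hk₂ : 0 ≤ k₂) (x y : ℝ) :
    |linLinLoss k₁ k₂ x - linLinLoss k₁ k₂ y| ≤ max k₁ k₂ * |x - y| := by
  rw [linLinLoss_eq_max hk₁ hk₂, linLinLoss_eq_max hk₁ hk₂, max_mul_of_nonneg _ _ (abs_nonneg _)]
  refine (abs_max_sub_max_le_max _ _ _ _).trans_eq ?_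
  rw [← mul_sub, ← mul_sub, abs_mul, abs_mul, abs_neg, abs_of_nonneg hk₁, abs_of_nonneg hk₂]

lemma abs_linLinLoss_le (hk₁ : 0 ≤ k₁) (hk₂ : 0 ≤ k₂) (x : ℝ) :
    |linLinLoss k₁ k₂ x| ≤ max k₁ k₂ * |x| := by
  simpa [linLinLoss] using abs_linLinLoss_sub_le hk₁ hk₂ x 0

lemma hasDerivAt_linLinLoss {x : ℝ} (hx : x ≠ 0) :
    HasDerivAt (linLinLoss k₁ k₂) (if 0 < x then k₁ else -k₂) x := by
  rcases hx.lt_or_gt with hx | hx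
  · rw [if_neg hx.not_gt]
    refine (hasDerivAt_mul_const (-k₂)).congr_of_eventuallyEq ?_
    filter_upwards [Iio_mem_nhds hx] with z hz
    rw [linLinLoss_of_nonpos hz.le, mul_comm]
  · rw [if_pos hx]
    refine (hasDerivAt_mul_const k₁).congr_of_eventuallyEq ?_
    filter_upwards [Ioi_mem_nhds hx] with z hz
    rw [linLinLoss_of_nonneg hz.le, mul_comm]

end Loss

lemma setIntegral_pos_of_pos {X : Type*} [MeasurableSpace X] {μ : Measure X} {g : X → ℝ}
    {s : Set X} (hs : MeasurableSet s) (hμs : μ s ≠ 0) (hg : ∀ x ∈ s, 0 < g x)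
    (hint : IntegrableOn g s μ) : 0 < ∫ x in s, g x ∂μ := by
  rw [setIntegral_pos_iff_support_of_nonneg_ae
    ((ae_restrict_iff' hs).2 (ae_of_all _ fun x hx => (hg x hx).le)) hint]
  exact lt_of_lt_of_le (pos_iff_ne_zero.2 hμs) (measure_mono fun x hx => ⟨(hg x hx).ne', hx⟩)

lemma setIntegral_Ioi_eq_add {g : ℝ → ℝ} {a b : ℝ} (hab : a ≤ b) (hg : IntegrableOn g (Ioi a)) :
    ∫ z in Ioi a, g z = (∫ z in Ioc a b, g z) + ∫ z in Ioi b, g z := by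
  rw [← setIntegral_union (Ioc_disjoint_Ioi le_rfl) measurableSet_Ioi
    (hg.mono_set Ioc_subset_Ioi_self) (hg.mono_set (Ioi_subset_Ioi hab)),
    Ioc_union_Ioi_eq_Ioi hab]

lemma integral_mul_quadratic {μ : Measure ℝ} {w : ℝ → ℝ} (h0 : Integrable w μ)
    (h1 : Integrable (fun z => w z * z) μ) (h2 : Integrable (fun z => w z * z ^ 2) μ)
    (a b c : ℝ) :
    ∫ z, w z * (a * z ^ 2 + b * z + c) ∂μ
      = a * (∫ z, w z * z ^ 2 ∂μ) + b * (∫ z, w z * z ∂μ) + c * ∫ z, w z ∂μ := by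
  have h : (fun z => w z * (a * z ^ 2 + b * z + c))
      = fun z => a * (w z * z ^ 2) + b * (w z * z) + c * w z := by
    ext z; ring
  rw [h, integral_add ((h2.const_mul a).fun_add (h1.const_mul b)) (h0.const_mul c),
    integral_add (h2.const_mul a) (h1.const_mul b), integral_const_mul, integral_const_mul,
    integral_const_mul]

lemma sq_integral_mul_id_le {μ : Measure ℝ} {w : ℝ → ℝ} (hw : 0 ≤ᵐ[μ] w)
    (h0 : Integrable w μ) (h1 : Integrable (fun z => w z * z) μ)
    (h2 : Integrable (fun z => w z * z ^ 2) μ) (hpos : 0 < ∫ z, w z ∂μ) :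
    (∫ z, w z * z ∂μ) ^ 2 ≤ (∫ z, w z ∂μ) * ∫ z, w z * z ^ 2 ∂μ := by
  set I := ∫ z, w z ∂μ
  set S := ∫ z, w z * z ∂μ
  have h := integral_nonneg_of_ae (hw.mono fun z hz => mul_nonneg hz (sq_nonneg (I * z - S)))
  have h' : (fun z => w z * (I * z - S) ^ 2)
      = fun z => w z * (I ^ 2 * z ^ 2 + (-2 * I * S) * z + S ^ 2) := by
    ext z; ring
  rw [h', integral_mul_quadratic h0 h1 h2] at h
  have : 0 ≤ I * (I * ∫ z, w z * z ^ 2 ∂μ - S ^ 2) := by linarith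
  linarith [(mul_nonneg_iff_of_pos_left hpos).1 this]

lemma sq_setIntegral_Ioi_le {g : ℝ → ℝ} {t M : ℝ} (hM : 0 < M)
    (hg_nonneg : ∀ z ∈ Ioi t, 0 ≤ g z) (hg_le : ∀ z ∈ Ioi t, g z ≤ M)
    (h0 : IntegrableOn g (Ioi t)) (h1 : IntegrableOn (fun z => g z * (z - t)) (Ioi t)) :
    (∫ z in Ioi t, g z) ^ 2 ≤ 2 * M * ∫ z in Ioi t, g z * (z - t) := by
  set G := ∫ z in Ioi t, g z
  set r := G / M
  have hr : 0 ≤ r := div_nonneg (setIntegral_nonneg measurableSet_Ioi hg_nonneg) hM.le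
  -- The block of height `M` on `(t, t + r]` carries the mass `G` as close to `t` as `g ≤ M` allows.
  have hpt : ∀ z ∈ Ioi t, (Ioc t (t + r)).indicator (fun z => M * (z - t - r)) z
      ≤ g z * (z - t) - r * g z := by
    intro z hz
    by_cases hzr : z ≤ t + r
    · rw [indicator_of_mem (show z ∈ Ioc t (t + r) from ⟨hz, hzr⟩)]
      nlinarith [hg_le z hz]
    · rw [indicator_of_notMem fun h => hzr h.2]
      nlinarith [hg_nonneg z hz]
  have hind : IntegrableOn ((Ioc t (t + r)).indicator fun z => M * (z - t - r)) (Ioi t) :=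
    ((Continuous.integrableOn_Ioc (by fun_prop)).integrable_indicator
      measurableSet_Ioc).integrableOn
  have hval : ∫ z in Ioc t (t + r), M * (z - t - r) = -(M * r ^ 2 / 2) := by
    rw [← intervalIntegral.integral_of_le (by linarith), intervalIntegral.integral_const_mul,
      intervalIntegral.integral_comp_sub_right (fun x => x - r) t]
    simp only [sub_self, add_sub_cancel_left]
    rw [intervalIntegral.integral_sub intervalIntegral.intervalIntegrable_id
      intervalIntegrable_const, integral_id, intervalIntegral.integral_const, smul_eq_mul]
    ring
  have h := setIntegral_mono_on hind (h1.fun_sub (h0.const_mul r)) measurableSet_Ioi hpt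
  rw [setIntegral_indicator measurableSet_Ioc, inter_eq_right.2 Ioc_subset_Ioi_self, hval,
    integral_sub h1 (h0.const_mul r), integral_const_mul] at h
  have hMr : M * r = G := mul_div_cancel₀ G hM.ne'
  nlinarith

section Density

variable {f : ℝ → ℝ}

lemma pos_of_even_of_strictAntiOn (hf_nonneg : ∀ x, 0 ≤ f x) (hf_even : f.Even)
    (hf_anti : StrictAntiOn f (Ici 0)) (x : ℝ) : 0 < f x := by
  have key : ∀ y, 0 ≤ y → 0 < f y := fun y hy =>
    (hf_nonneg (y + 1)).trans_lt (hf_anti hy (by simp only [mem_Ici]; linarith) (by linarith))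
  rcases le_total 0 x with hx | hx
  · exact key x hx
  · rw [← hf_even]; exact key _ (neg_nonneg.2 hx)

lemma integrable_mul_of_abs_le_quadratic (hf_nonneg : ∀ x, 0 ≤ f x) (hf_int : Integrable f)
    (hmom : Integrable fun z => z ^ 2 * f z) {φ : ℝ → ℝ} (hφ : AEStronglyMeasurable φ)
    {a b : ℝ} (hbound : ∀ z, |φ z| ≤ a + b * z ^ 2) :
    Integrable fun z => f z * φ z := by
  refine ((hf_int.const_mul a).add (hmom.const_mul b)).mono' (hf_int.1.mul hφ)
    (ae_of_all _ fun z => ?_)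
  rw [Real.norm_eq_abs, abs_mul, abs_of_nonneg (hf_nonneg z), Pi.add_apply]
  nlinarith [mul_le_mul_of_nonneg_left (hbound z) (hf_nonneg z)]

lemma integrable_mul_id (hf_nonneg : ∀ x, 0 ≤ f x) (hf_int : Integrable f)
    (hmom : Integrable fun z => z ^ 2 * f z) : Integrable fun z => f z * z :=
  integrable_mul_of_abs_le_quadratic hf_nonneg hf_int hmom aestronglyMeasurable_id
    (a := 1) (b := 1) fun z => by nlinarith [sq_nonneg (|z| - 1), sq_abs z]

lemma integrable_mul_linLinLoss_add (hf_nonneg : ∀ x, 0 ≤ f x) (hf_int : Integrable f)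
    (hmom : Integrable fun z => z ^ 2 * f z) {k₁ k₂ : ℝ} (hk₁ : 0 ≤ k₁) (hk₂ : 0 ≤ k₂) (c : ℝ) :
    Integrable fun z => f z * linLinLoss k₁ k₂ (z + c) := by
  have hK : 0 ≤ max k₁ k₂ := le_max_of_le_left hk₁
  refine integrable_mul_of_abs_le_quadratic hf_nonneg hf_int hmom
    (measurable_linLinLoss.comp (measurable_add_const c)).aestronglyMeasurable
    (a := max k₁ k₂ * (1 + 2 * c ^ 2)) (b := 2 * max k₁ k₂) fun z => ?_
  have h1 : |z + c| ≤ 1 + 2 * c ^ 2 + 2 * z ^ 2 := by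
    nlinarith [sq_nonneg (|z + c| - 1), sq_abs (z + c), sq_nonneg (z - c)]
  nlinarith [abs_linLinLoss_le hk₁ hk₂ (z + c), mul_le_mul_of_nonneg_left h1 hK]

lemma integrable_mul_linLinLoss_add_sq (hf_nonneg : ∀ x, 0 ≤ f x) (hf_int : Integrable f)
    (hmom : Integrable fun z => z ^ 2 * f z) {k₁ k₂ : ℝ} (hk₁ : 0 ≤ k₁) (hk₂ : 0 ≤ k₂) (c : ℝ) :
    Integrable fun z => f z * linLinLoss k₁ k₂ (z + c) ^ 2 := by
  refine integrable_mul_of_abs_le_quadratic hf_nonneg hf_int hmom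
    ((measurable_linLinLoss.comp (measurable_add_const c)).pow_const 2).aestronglyMeasurable
    (a := 2 * max k₁ k₂ ^ 2 * c ^ 2) (b := 2 * max k₁ k₂ ^ 2) fun z => ?_
  have h1 := pow_le_pow_left₀ (abs_nonneg _) (abs_linLinLoss_le hk₁ hk₂ (z + c)) 2
  rw [mul_pow, sq_abs, sq_abs] at h1
  rw [abs_of_nonneg (sq_nonneg _)]
  nlinarith [sq_nonneg (z - c), sq_nonneg (max k₁ k₂)]

lemma integral_mul_comp_neg (hf_even : f.Even) (φ : ℝ → ℝ) :
    ∫ z, f z * φ (-z) = ∫ z, f z * φ z := by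
  have h : ∀ z, f (-z) = f z := hf_even
  simpa only [h] using integral_neg_eq_self (fun z => f z * φ z) volume

lemma integrable_mul_comp_neg (hf_even : f.Even) {φ : ℝ → ℝ}
    (hint : Integrable fun z => f z * φ z) : Integrable fun z => f z * φ (-z) := by
  have h : ∀ z, f (-z) = f z := hf_even
  simpa only [h] using hint.comp_neg

lemma integral_mul_eq_setIntegral_Ioi_fold (hf_even : f.Even) {φ : ℝ → ℝ}
    (hint : Integrable fun z => f z * φ z) :
    ∫ z, f z * φ z = ∫ z in Ioi 0, f z * (φ z + φ (-z)) := by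
  have h : ∀ z, f (-z) = f z := hf_even
  have hneg := integrable_mul_comp_neg hf_even hint
  have hIic : ∫ z in Iic 0, f z * φ z = ∫ z in Ioi 0, f z * φ (-z) := by
    simpa only [h, neg_zero] using (integral_comp_neg_Ioi 0 fun z => f z * φ z).symm
  simp only [mul_add]
  rw [← intervalIntegral.integral_Iic_add_Ioi hint.integrableOn hint.integrableOn, hIic,
    integral_add hint.integrableOn hneg.integrableOn, add_comm]

lemma integral_mul_eq_of_fold (hf_even : f.Even) {φ p q : ℝ → ℝ}
    (hint : Integrable fun z => f z * φ z) {t : ℝ} (ht : 0 ≤ t)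
    (hp : ∀ z ∈ Ioc 0 t, φ z + φ (-z) = p z) (hq : ∀ z ∈ Ioi t, φ z + φ (-z) = q z) :
    ∫ z, f z * φ z = (∫ z in Ioc 0 t, f z * p z) + ∫ z in Ioi t, f z * q z := by
  have hfold : Integrable fun z => f z * (φ z + φ (-z)) := by
    simpa only [mul_add] using hint.fun_add (integrable_mul_comp_neg hf_even hint)
  rw [integral_mul_eq_setIntegral_Ioi_fold hf_even hint,
    setIntegral_Ioi_eq_add ht hfold.integrableOn,
    setIntegral_congr_fun measurableSet_Ioc fun z hz => congrArg (f z * ·) (hp z hz),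
    setIntegral_congr_fun measurableSet_Ioi fun z hz => congrArg (f z * ·) (hq z hz)]

lemma setIntegral_Ioi_add_setIntegral_Iio (hf_int : Integrable f) (a : ℝ) :
    (∫ z in Ioi a, f z) + ∫ z in Iio a, f z = ∫ z, f z := by
  rw [← integral_Iic_eq_integral_Iio, add_comm,
    intervalIntegral.integral_Iic_add_Ioi hf_int.integrableOn hf_int.integrableOn]

lemma setIntegral_Iio_eq_setIntegral_Ioi_neg (hf_even : f.Even) (a : ℝ) :
    ∫ z in Iio a, f z = ∫ z in Ioi (-a), f z := by
  have h : ∀ z, f (-z) = f z := hf_even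
  rw [← integral_Iic_eq_integral_Iio]
  simpa only [h, neg_neg] using (integral_comp_neg_Ioi (-a) f).symm

lemma setIntegral_Ioi_zero_eq_half (hf_even : f.Even) (hf_int : Integrable f)
    (hf_total : ∫ z, f z = 1) : ∫ z in Ioi 0, f z = 1 / 2 := by
  have := setIntegral_Ioi_add_setIntegral_Iio hf_int 0
  rw [setIntegral_Iio_eq_setIntegral_Ioi_neg hf_even, neg_zero, hf_total] at this
  linarith

lemma strictAnti_setIntegral_Ioi (hf_pos : ∀ x, 0 < f x) (hf_int : Integrable f) :
    StrictAnti fun a => ∫ z in Ioi a, f z := by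
  intro a b hab
  have hvol : volume (Ioc a b) ≠ 0 := by
    rw [Real.volume_Ioc]; exact (ENNReal.ofReal_pos.2 (sub_pos.2 hab)).ne'
  have := setIntegral_pos_of_pos measurableSet_Ioc hvol (fun x _ => hf_pos x) hf_int.integrableOn
  simp only [setIntegral_Ioi_eq_add hab.le hf_int.integrableOn]
  linarith

end Density

section FirstOrderCondition

variable {f : ℝ → ℝ} {k₁ k₂ : ℝ}

lemma hasDerivAt_integral_mul_linLinLoss_add (hf_nonneg : ∀ x, 0 ≤ f x)
    (hf_int : Integrable f) (hmom : Integrable fun z => z ^ 2 * f z)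
    (hk₁ : 0 ≤ k₁) (hk₂ : 0 ≤ k₂) (C : ℝ) :
    HasDerivAt (fun c => ∫ z, f z * linLinLoss k₁ k₂ (z + c))
      (k₁ * (∫ z in Ioi (-C), f z) - k₂ * ∫ z in Iio (-C), f z) C := by
  set K := max k₁ k₂
  set F' : ℝ → ℝ := fun z => k₁ * (Ioi (-C)).indicator f z - k₂ * (Iio (-C)).indicator f z
  have hF' : Integrable F' := ((hf_int.indicator measurableSet_Ioi).const_mul k₁).sub
    ((hf_int.indicator measurableSet_Iio).const_mul k₂)
  have hlip : ∀ z, LipschitzOnWith (Real.nnabs (K * f z))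
      (fun c => f z * linLinLoss k₁ k₂ (z + c)) (Metric.ball C 1) := fun z =>
    LipschitzOnWith.of_dist_le_mul fun x _ y _ => by
      rw [Real.dist_eq, Real.dist_eq, ← mul_sub, abs_mul, abs_of_nonneg (hf_nonneg z),
        Real.coe_nnabs, abs_of_nonneg (mul_nonneg (le_max_of_le_left hk₁) (hf_nonneg z)),
        mul_comm K, mul_assoc]
      refine mul_le_mul_of_nonneg_left ?_ (hf_nonneg z)
      simpa only [add_sub_add_left_eq_sub] using abs_linLinLoss_sub_le hk₁ hk₂ (z + x) (z + y)
  have hdiff : ∀ z, z ≠ -C → HasDerivAt (fun c => f z * linLinLoss k₁ k₂ (z + c)) (F' z) C := by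
    intro z hz
    have hzC : z + C ≠ 0 := fun h => hz (eq_neg_of_add_eq_zero_left h)
    refine (((hasDerivAt_linLinLoss hzC).comp_const_add z C).const_mul (f z)).congr_deriv ?_
    simp only [F', indicator_apply, mem_Ioi, mem_Iio]
    rcases hz.lt_or_gt with hz | hz <;> split_ifs <;> first | (exfalso; linarith) | ring
  have key := (hasDerivAt_integral_of_dominated_loc_of_lip (Metric.ball_mem_nhds C one_pos)
    (Eventually.of_forall fun c => (hf_int.1.mul
      (measurable_linLinLoss.comp (measurable_add_const c)).aestronglyMeasurable))
    (integrable_mul_linLinLoss_add hf_nonneg hf_int hmom hk₁ hk₂ C) hF'.1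
    (ae_of_all _ hlip) (hf_int.const_mul K)
    (by filter_upwards [compl_mem_ae_iff.2 (measure_singleton (-C))] with z hz using hdiff z hz)).2
  rwa [integral_sub ((hf_int.indicator measurableSet_Ioi).const_mul k₁)
      ((hf_int.indicator measurableSet_Iio).const_mul k₂), integral_const_mul, integral_const_mul,
    integral_indicator measurableSet_Ioi, integral_indicator measurableSet_Iio] at key

lemma setIntegral_Ioi_neg_eq_of_isLocalMin (hf_nonneg : ∀ x, 0 ≤ f x) (hf_int : Integrable f)
    (hf_total : ∫ z, f z = 1) (hmom : Integrable fun z => z ^ 2 * f z)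
    (hk₁ : 0 < k₁) (hk₂ : 0 < k₂) {C : ℝ}
    (hC : IsLocalMin (fun c => ∫ z, f z * linLinLoss k₁ k₂ (z + c)) C) :
    ∫ z in Ioi (-C), f z = k₂ / (k₁ + k₂) := by
  have hfoc := hC.hasDerivAt_eq_zero
    (hasDerivAt_integral_mul_linLinLoss_add hf_nonneg hf_int hmom hk₁.le hk₂.le C)
  have hsum := setIntegral_Ioi_add_setIntegral_Iio hf_int (-C)
  rw [hf_total] at hsum
  rw [eq_div_iff (by positivity)]
  linear_combination hfoc + k₂ * hsum

end FirstOrderCondition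

section Transfer

variable {Ω : Type*} [MeasurableSpace Ω] {μ : Measure Ω} {Z : Ω → ℝ} {f : ℝ → ℝ}

lemma integral_comp_eq_integral_mul_density (hZ : AEMeasurable Z μ) (hf : AEMeasurable f)
    (hf_nonneg : ∀ x, 0 ≤ f x)
    (hdens : μ.map Z = volume.withDensity fun z => ENNReal.ofReal (f z)) {φ : ℝ → ℝ}
    (hφ : AEStronglyMeasurable φ) : ∫ ω, φ (Z ω) ∂μ = ∫ z, f z * φ z := by
  have hac : μ.map Z ≪ volume := hdens ▸ withDensity_absolutelyContinuous _ _
  rw [← integral_map hZ (hφ.mono_ac hac), hdens, integral_withDensity_eq_integral_toReal_smul₀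
    hf.ennreal_ofReal (ae_of_all _ fun _ => ENNReal.ofReal_lt_top)]
  simp only [ENNReal.toReal_ofReal (hf_nonneg _), smul_eq_mul]

lemma integrable_comp_iff_integrable_mul_density (hZ : AEMeasurable Z μ) (hf : AEMeasurable f)
    (hf_nonneg : ∀ x, 0 ≤ f x)
    (hdens : μ.map Z = volume.withDensity fun z => ENNReal.ofReal (f z)) {φ : ℝ → ℝ}
    (hφ : AEStronglyMeasurable φ) :
    Integrable (fun ω => φ (Z ω)) μ ↔ Integrable fun z => f z * φ z := by
  have hac : μ.map Z ≪ volume := hdens ▸ withDensity_absolutelyContinuous _ _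
  rw [show (fun ω => φ (Z ω)) = φ ∘ Z from rfl, ← integrable_map_measure (hφ.mono_ac hac) hZ,
    hdens, integrable_withDensity_iff_integrable_smul₀' hf.ennreal_ofReal
      (ae_of_all _ fun _ => ENNReal.ofReal_lt_top)]
  simp only [ENNReal.toReal_ofReal (hf_nonneg _), smul_eq_mul]

lemma variance_comp_eq [IsProbabilityMeasure μ] (hZ : AEMeasurable Z μ) (hf : AEMeasurable f)
    (hf_nonneg : ∀ x, 0 ≤ f x)
    (hdens : μ.map Z = volume.withDensity fun z => ENNReal.ofReal (f z)) {φ : ℝ → ℝ}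
    (hφ : AEStronglyMeasurable φ) (hφ2 : Integrable fun z => f z * φ z ^ 2) :
    variance (fun ω => φ (Z ω)) μ = (∫ z, f z * φ z ^ 2) - (∫ z, f z * φ z) ^ 2 := by
  have hac : μ.map Z ≪ volume := hdens ▸ withDensity_absolutelyContinuous _ _
  have hmem : MemLp (fun ω => φ (Z ω)) 2 μ :=
    (memLp_two_iff_integrable_sq ((hφ.mono_ac hac).comp_aemeasurable hZ)).2
      ((integrable_comp_iff_integrable_mul_density hZ hf hf_nonneg hdens (hφ.pow 2)).2 hφ2)
  rw [variance_eq_sub hmem]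
  simp only [Pi.pow_apply]
  rw [integral_comp_eq_integral_mul_density (φ := fun z => φ z ^ 2) hZ hf hf_nonneg hdens
      (hφ.pow 2),
    integral_comp_eq_integral_mul_density hZ hf hf_nonneg hdens hφ]

end Transfer

/-- The two sides are `lossVariance` at `-t` and at `0` in terms of the partial moments
(`J` is the second moment on `(t, ∞)`); `hfoc` is the first-order condition. -/
lemma explicit_variance_lt {a b t I S Q G T J : ℝ} (hb : 0 < b) (ht : 0 ≤ t)
    (hfoc : (a - b) * G = 2 * b * I) (hmass : 2 * (I + G) = 1) (hI : 0 < I) (hQ : 0 < Q)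
    (hG : 0 < G) (hT : 0 ≤ T) (hS : S ≤ t * I) (hCS : S ^ 2 ≤ I * Q)
    (hbath : t * G ^ 2 ≤ 2 * I * (T - t * G)) :
    2 * b ^ 2 * (Q + t ^ 2 * I) + (a ^ 2 + b ^ 2) * (J + t ^ 2 * G)
        + 2 * t * (b ^ 2 - a ^ 2) * T - (2 * b * t * I + (a + b) * T + (b - a) * t * G) ^ 2
      < (a ^ 2 + b ^ 2) * (Q + J) - ((a + b) * (S + T)) ^ 2 := by
  set Δ := 2 * I * Q + 4 * I * t * T - t ^ 2 * G * (G + 2 * I) - S ^ 2 - 2 * S * T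
  set B := (a - b) * (Q + 2 * t * T) - a * t ^ 2 * G - (a + b) * (S ^ 2 + 2 * S * T)
  have hΔ : I * Q ≤ Δ := by
    nlinarith [mul_le_mul_of_nonneg_right hS hT, mul_le_mul_of_nonneg_left hbath ht]
  have hGB : G * B = b * Δ := by
    linear_combination (Q + 2 * t * T - t ^ 2 * G - S ^ 2 - 2 * S * T) * hfoc
      - b * (S ^ 2 + 2 * S * T) * hmass
  have hab : 0 < a + b := by nlinarith
  have hB : 0 < B :=
    pos_of_mul_pos_right (hGB ▸ mul_pos hb ((mul_pos hI hQ).trans_le hΔ)) hG.le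
  have hgap : (a ^ 2 + b ^ 2) * (Q + J) - ((a + b) * (S + T)) ^ 2
      - (2 * b ^ 2 * (Q + t ^ 2 * I) + (a ^ 2 + b ^ 2) * (J + t ^ 2 * G)
        + 2 * t * (b ^ 2 - a ^ 2) * T - (2 * b * t * I + (a + b) * T + (b - a) * t * G) ^ 2)
      = (a + b) * B := by
    linear_combination (b * t ^ 2 - 2 * (a + b) * t * T + t ^ 2 * ((a - b) * G - 2 * b * I)) * hfoc
  linarith [mul_pos hab hB]

noncomputable def lossVariance (f : ℝ → ℝ) (k₁ k₂ c : ℝ) : ℝ :=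
  (∫ z, f z * linLinLoss k₁ k₂ (z + c) ^ 2) - (∫ z, f z * linLinLoss k₁ k₂ (z + c)) ^ 2

section Variance

variable {f : ℝ → ℝ} {k₁ k₂ : ℝ}

lemma integral_mul_linLinLoss_sub (hf_nonneg : ∀ x, 0 ≤ f x) (hf_even : f.Even)
    (hf_int : Integrable f) (hmom : Integrable fun z => z ^ 2 * f z)
    (hk₁ : 0 ≤ k₁) (hk₂ : 0 ≤ k₂) {t : ℝ} (ht : 0 ≤ t) :
    ∫ z, f z * linLinLoss k₁ k₂ (z - t)
      = 2 * k₂ * t * (∫ z in Ioc 0 t, f z) + (k₁ + k₂) * (∫ z in Ioi t, f z * z)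
        + (k₂ - k₁) * t * ∫ z in Ioi t, f z := by
  have h1 := integrable_mul_id hf_nonneg hf_int hmom
  have h2 : Integrable fun z => f z * z ^ 2 := hmom.congr (ae_of_all _ fun z => mul_comm _ _)
  have hint : Integrable fun z => f z * linLinLoss k₁ k₂ (z - t) := by
    simpa only [sub_eq_add_neg] using
      integrable_mul_linLinLoss_add hf_nonneg hf_int hmom hk₁ hk₂ (-t)
  rw [integral_mul_eq_of_fold hf_even hint ht (p := fun z => 0 * z ^ 2 + 0 * z + 2 * k₂ * t)
      (q := fun z => 0 * z ^ 2 + (k₁ + k₂) * z + (k₂ - k₁) * t),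
    integral_mul_quadratic hf_int.integrableOn h1.integrableOn h2.integrableOn,
    integral_mul_quadratic hf_int.integrableOn h1.integrableOn h2.integrableOn]
  · ring
  · intro z hz
    rw [linLinLoss_of_nonpos (by linarith [hz.2]), linLinLoss_of_nonpos (by linarith [hz.1])]
    ring
  · intro z hz
    rw [linLinLoss_of_nonneg (by linarith [mem_Ioi.1 hz]),
      linLinLoss_of_nonpos (by linarith [mem_Ioi.1 hz])]
    ring

lemma integral_mul_linLinLoss_sub_sq (hf_nonneg : ∀ x, 0 ≤ f x) (hf_even : f.Even)
    (hf_int : Integrable f) (hmom : Integrable fun z => z ^ 2 * f z)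
    (hk₁ : 0 ≤ k₁) (hk₂ : 0 ≤ k₂) {t : ℝ} (ht : 0 ≤ t) :
    ∫ z, f z * linLinLoss k₁ k₂ (z - t) ^ 2
      = 2 * k₂ ^ 2 * ((∫ z in Ioc 0 t, f z * z ^ 2) + t ^ 2 * ∫ z in Ioc 0 t, f z)
        + (k₁ ^ 2 + k₂ ^ 2) * ((∫ z in Ioi t, f z * z ^ 2) + t ^ 2 * ∫ z in Ioi t, f z)
        + 2 * t * (k₂ ^ 2 - k₁ ^ 2) * ∫ z in Ioi t, f z * z := by
  have h1 := integrable_mul_id hf_nonneg hf_int hmom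
  have h2 : Integrable fun z => f z * z ^ 2 := hmom.congr (ae_of_all _ fun z => mul_comm _ _)
  have hint : Integrable fun z => f z * linLinLoss k₁ k₂ (z - t) ^ 2 := by
    simpa only [sub_eq_add_neg] using
      integrable_mul_linLinLoss_add_sq hf_nonneg hf_int hmom hk₁ hk₂ (-t)
  rw [integral_mul_eq_of_fold hf_even hint ht
      (p := fun z => 2 * k₂ ^ 2 * z ^ 2 + 0 * z + 2 * k₂ ^ 2 * t ^ 2)
      (q := fun z => (k₁ ^ 2 + k₂ ^ 2) * z ^ 2 + 2 * t * (k₂ ^ 2 - k₁ ^ 2) * z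
        + (k₁ ^ 2 + k₂ ^ 2) * t ^ 2),
    integral_mul_quadratic hf_int.integrableOn h1.integrableOn h2.integrableOn,
    integral_mul_quadratic hf_int.integrableOn h1.integrableOn h2.integrableOn]
  · ring
  · intro z hz
    rw [linLinLoss_of_nonpos (by linarith [hz.2]), linLinLoss_of_nonpos (by linarith [hz.1])]
    ring
  · intro z hz
    rw [linLinLoss_of_nonneg (by linarith [mem_Ioi.1 hz]),
      linLinLoss_of_nonpos (by linarith [mem_Ioi.1 hz])]
    ring

lemma mul_sq_setIntegral_Ioi_le (hf_pos : ∀ x, 0 < f x) (hf_anti : StrictAntiOn f (Ici 0))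
    (hf_int : Integrable f) (h1 : Integrable fun z => f z * z) {t : ℝ} (ht : 0 < t) :
    t * (∫ z in Ioi t, f z) ^ 2
      ≤ 2 * (∫ z in Ioc 0 t, f z) * ((∫ z in Ioi t, f z * z) - t * ∫ z in Ioi t, f z) := by
  have hshift : ∫ z in Ioi t, f z * (z - t) = (∫ z in Ioi t, f z * z) - t * ∫ z in Ioi t, f z := by
    simp only [mul_sub]
    rw [integral_sub h1.integrableOn (hf_int.mul_const t).integrableOn, integral_mul_const,
      mul_comm]
  have hbath := sq_setIntegral_Ioi_le (hf_pos t) (fun z _ => (hf_pos z).le)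
    (fun z hz => (hf_anti (mem_Ici.2 ht.le) (mem_Ici.2 (ht.trans hz).le) hz).le)
    hf_int.integrableOn (by simpa only [mul_sub] using (h1.sub' (hf_int.mul_const t)).integrableOn)
  have hmass : t * f t ≤ ∫ z in Ioc 0 t, f z := by
    have h := setIntegral_mono_on (integrableOn_const (by simp)) hf_int.integrableOn
      measurableSet_Ioc fun z hz => hf_anti.antitoneOn (mem_Ici.2 hz.1.le) (mem_Ici.2 ht.le) hz.2
    rwa [setIntegral_const, Real.volume_real_Ioc_of_le ht.le, sub_zero, smul_eq_mul] at h
  rw [hshift] at hbath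
  have hgap : 0 ≤ (∫ z in Ioi t, f z * z) - t * ∫ z in Ioi t, f z :=
    nonneg_of_mul_nonneg_right (by nlinarith) (mul_pos two_pos (hf_pos t))
  nlinarith [mul_le_mul_of_nonneg_left hbath ht.le, mul_le_mul_of_nonneg_right hmass hgap]

lemma lossVariance_swap (hf_even : f.Even) (c : ℝ) :
    lossVariance f k₂ k₁ (-c) = lossVariance f k₁ k₂ c := by
  simp only [lossVariance]
  rw [← integral_mul_comp_neg hf_even,
    ← integral_mul_comp_neg hf_even (fun z => linLinLoss k₂ k₁ (z + -c))]
  simp only [← neg_add, linLinLoss_neg]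

lemma lossVariance_neg_eq (hf_nonneg : ∀ x, 0 ≤ f x) (hf_even : f.Even)
    (hf_int : Integrable f) (hmom : Integrable fun z => z ^ 2 * f z)
    (hk₁ : 0 ≤ k₁) (hk₂ : 0 ≤ k₂) {t : ℝ} (ht : 0 ≤ t) :
    lossVariance f k₁ k₂ (-t)
      = 2 * k₂ ^ 2 * ((∫ z in Ioc 0 t, f z * z ^ 2) + t ^ 2 * ∫ z in Ioc 0 t, f z)
        + (k₁ ^ 2 + k₂ ^ 2) * ((∫ z in Ioi t, f z * z ^ 2) + t ^ 2 * ∫ z in Ioi t, f z)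
        + 2 * t * (k₂ ^ 2 - k₁ ^ 2) * (∫ z in Ioi t, f z * z)
        - (2 * k₂ * t * (∫ z in Ioc 0 t, f z) + (k₁ + k₂) * (∫ z in Ioi t, f z * z)
          + (k₂ - k₁) * t * ∫ z in Ioi t, f z) ^ 2 := by
  simp only [lossVariance, ← sub_eq_add_neg]
  rw [integral_mul_linLinLoss_sub hf_nonneg hf_even hf_int hmom hk₁ hk₂ ht,
    integral_mul_linLinLoss_sub_sq hf_nonneg hf_even hf_int hmom hk₁ hk₂ ht]

lemma lossVariance_zero_eq (hf_nonneg : ∀ x, 0 ≤ f x) (hf_even : f.Even)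
    (hf_int : Integrable f) (hmom : Integrable fun z => z ^ 2 * f z)
    (hk₁ : 0 ≤ k₁) (hk₂ : 0 ≤ k₂) :
    lossVariance f k₁ k₂ 0
      = (k₁ ^ 2 + k₂ ^ 2) * (∫ z in Ioi 0, f z * z ^ 2)
        - ((k₁ + k₂) * ∫ z in Ioi 0, f z * z) ^ 2 := by
  simpa only [neg_zero, Ioc_self, Measure.restrict_empty, integral_zero_measure, mul_zero,
    zero_mul, add_zero, zero_add, ne_eq, OfNat.ofNat_ne_zero, not_false_eq_true, zero_pow]
    using lossVariance_neg_eq hf_nonneg hf_even hf_int hmom hk₁ hk₂ le_rfl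

lemma lossVariance_neg_lt_lossVariance_zero (hf_pos : ∀ x, 0 < f x) (hf_even : f.Even)
    (hf_anti : StrictAntiOn f (Ici 0)) (hf_int : Integrable f) (hf_total : ∫ z, f z = 1)
    (hmom : Integrable fun z => z ^ 2 * f z) (hk₁ : 0 < k₁) (hk₂ : 0 < k₂) {t : ℝ} (ht : 0 < t)
    (htail : ∫ z in Ioi t, f z = k₂ / (k₁ + k₂)) :
    lossVariance f k₁ k₂ (-t) < lossVariance f k₁ k₂ 0 := by
  have hf_nonneg : ∀ x, 0 ≤ f x := fun x => (hf_pos x).le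
  have h1 := integrable_mul_id hf_nonneg hf_int hmom
  have h2 : Integrable fun z => f z * z ^ 2 := hmom.congr (ae_of_all _ fun z => mul_comm _ _)
  have hvol : volume (Ioc 0 t) ≠ 0 := by
    rw [Real.volume_Ioc]; exact (ENNReal.ofReal_pos.2 (sub_pos.2 ht)).ne'
  have hI := setIntegral_pos_of_pos measurableSet_Ioc hvol (fun z _ => hf_pos z)
    hf_int.integrableOn
  have hmass := setIntegral_Ioi_eq_add ht.le hf_int.integrableOn
  rw [setIntegral_Ioi_zero_eq_half hf_even hf_int hf_total] at hmass
  rw [lossVariance_neg_eq hf_nonneg hf_even hf_int hmom hk₁.le hk₂.le ht.le,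
    lossVariance_zero_eq hf_nonneg hf_even hf_int hmom hk₁.le hk₂.le,
    setIntegral_Ioi_eq_add ht.le h1.integrableOn, setIntegral_Ioi_eq_add ht.le h2.integrableOn]
  refine explicit_variance_lt hk₂ ht.le ?_ (by linarith) hI
    (setIntegral_pos_of_pos measurableSet_Ioc hvol
      (fun z hz => mul_pos (hf_pos z) (pow_pos hz.1 2)) h2.integrableOn)
    (htail ▸ div_pos hk₂ (add_pos hk₁ hk₂))
    (setIntegral_nonneg measurableSet_Ioi fun z hz => mul_nonneg (hf_nonneg z) (ht.trans hz).le)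
    ?_ ?_ (mul_sq_setIntegral_Ioi_le hf_pos hf_anti hf_int h1 ht)
  · rw [show ∫ z in Ioc 0 t, f z = 1 / 2 - k₂ / (k₁ + k₂) by linarith, htail]
    field_simp
    ring
  · rw [← integral_const_mul]
    exact setIntegral_mono_on h1.integrableOn (hf_int.const_mul t).integrableOn measurableSet_Ioc
      fun z hz => by rw [mul_comm t]; exact mul_le_mul_of_nonneg_left hz.2 (hf_nonneg z)
  · exact sq_integral_mul_id_le
      ((ae_restrict_iff' measurableSet_Ioc).2 (ae_of_all _ fun z _ => hf_nonneg z))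
      hf_int.integrableOn h1.integrableOn h2.integrableOn hI

lemma lossVariance_lt_lossVariance_zero (hf_pos : ∀ x, 0 < f x) (hf_even : f.Even)
    (hf_anti : StrictAntiOn f (Ici 0)) (hf_int : Integrable f) (hf_total : ∫ z, f z = 1)
    (hmom : Integrable fun z => z ^ 2 * f z) (hk₁ : 0 < k₁) (hk₂ : 0 < k₂) {C : ℝ} (hC : C ≠ 0)
    (htail : ∫ z in Ioi (-C), f z = k₂ / (k₁ + k₂)) :
    lossVariance f k₁ k₂ C < lossVariance f k₁ k₂ 0 := by
  rcases hC.lt_or_gt with hC | hC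
  · simpa only [neg_neg] using lossVariance_neg_lt_lossVariance_zero hf_pos hf_even hf_anti
      hf_int hf_total hmom hk₁ hk₂ (neg_pos.2 hC) htail
  · rw [← lossVariance_swap hf_even C, ← lossVariance_swap hf_even 0, neg_zero]
    refine lossVariance_neg_lt_lossVariance_zero hf_pos hf_even hf_anti hf_int hf_total hmom
      hk₂ hk₁ hC ?_
    have hsum := setIntegral_Ioi_add_setIntegral_Iio hf_int (-C)
    rw [setIntegral_Iio_eq_setIntegral_Ioi_neg hf_even, neg_neg, htail, hf_total] at hsum
    rw [eq_div_iff (by positivity)]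
    field_simp at hsum
    linarith

end Variance

end AsymmetricLoss

open AsymmetricLoss in
theorem variance_loss_shift_eq_iff_general
    {Ω : Type*} [MeasurableSpace Ω] (μ : Measure Ω) [IsProbabilityMeasure μ]
    (f : ℝ → ℝ) (hf_nonneg : ∀ x, 0 ≤ f x)
    (hf_total : ∫ z, f z = 1)
    (hf_symm : ∀ x, f (-x) = f x)
    (hf_anti : ∀ x y : ℝ, 0 ≤ x → x < y → f y < f x)
    (Z : Ω → ℝ) (hZ : Measurable Z)
    (hdens : Measure.map Z μ = volume.withDensity (fun z => ENNReal.ofReal (f z)))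
    (hmom : Integrable (fun z => z ^ 2 * f z))
    (k₁ k₂ : ℝ) (hk₁ : 0 < k₁) (hk₂ : 0 < k₂)
    (L : ℝ → ℝ) (hL : ∀ z, L z = if 0 ≤ z then k₁ * z else -k₂ * z)
    (C : ℝ) (hC : ∀ c : ℝ, (∫ ω, L (Z ω + C) ∂μ) ≤ ∫ ω, L (Z ω + c) ∂μ) :
    (variance (fun ω => L (Z ω + C)) μ = variance (fun ω => L (Z ω)) μ ↔ C = 0)
      ∧ (C = 0 ↔ k₁ = k₂) := by
  obtain rfl : L = linLinLoss k₁ k₂ := funext hL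
  have hf_int : Integrable f := integrable_of_integral_eq_one hf_total
  have hf_anti' : StrictAntiOn f (Ici 0) := fun x hx y _ hxy => hf_anti x y hx hxy
  have hf_pos := pos_of_even_of_strictAntiOn hf_nonneg hf_symm hf_anti'
  have hφ (c : ℝ) : AEStronglyMeasurable fun z => linLinLoss k₁ k₂ (z + c) :=
    (measurable_linLinLoss.comp (measurable_add_const c)).aestronglyMeasurable
  have hvar (c : ℝ) : variance (fun ω => linLinLoss k₁ k₂ (Z ω + c)) μ = lossVariance f k₁ k₂ c :=
    variance_comp_eq (φ := fun z => linLinLoss k₁ k₂ (z + c)) hZ.aemeasurable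
      hf_int.1.aemeasurable hf_nonneg hdens (hφ c)
      (integrable_mul_linLinLoss_add_sq hf_nonneg hf_int hmom hk₁.le hk₂.le c)
  have hmean (c : ℝ) : ∫ ω, linLinLoss k₁ k₂ (Z ω + c) ∂μ = ∫ z, f z * linLinLoss k₁ k₂ (z + c) :=
    integral_comp_eq_integral_mul_density (φ := fun z => linLinLoss k₁ k₂ (z + c))
      hZ.aemeasurable hf_int.1.aemeasurable hf_nonneg hdens (hφ c)
  have hmin : IsLocalMin (fun c => ∫ z, f z * linLinLoss k₁ k₂ (z + c)) C :=
    Eventually.of_forall fun c => by simpa only [hmean] using hC c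
  have htail := setIntegral_Ioi_neg_eq_of_isLocalMin hf_nonneg hf_int hf_total hmom hk₁ hk₂ hmin
  have hC₀ : C = 0 ↔ k₁ = k₂ := by
    rw [← neg_eq_zero, ← (strictAnti_setIntegral_Ioi hf_pos hf_int).injective.eq_iff, htail,
      setIntegral_Ioi_zero_eq_half hf_symm hf_int hf_total, div_eq_iff (by positivity)]
    constructor <;> intro h <;> linarith
  refine ⟨⟨fun h => by_contra fun hC0 => ?_, fun h => by simp only [h, add_zero]⟩, hC₀⟩
  have hlt := lossVariance_lt_lossVariance_zero hf_pos hf_symm hf_anti' hf_int hf_total hmom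
    hk₁ hk₂ hC0 htail
  simp only [← hvar, add_zero] at hlt
  exact hlt.ne h

/-- Let `f` be a symmetric probability density, strictly decreasing on `[0, ∞)`,
`Z` a random variable with density `f` and finite second moment, and
`L` the asymmetric loss with slopes `k₁, k₂ > 0`.  If `C` minimizes
`c ↦ E[L(Z + c)]`, then `Var[L(Z + C)] = Var[L(Z)]` iff `C = 0`, which in turn
holds iff `k₁ = k₂`. -/
theorem variance_loss_shift_eq_iff
    {Ω : Type*} [MeasurableSpace Ω] (μ : Measure Ω) [IsProbabilityMeasure μ]
    (f : ℝ → ℝ) (hf_meas : Measurable f) (hf_nonneg : ∀ x, 0 ≤ f x)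
    (hf_total : ∫ z, f z = 1)
    (hf_symm : ∀ x, f (-x) = f x)
    (hf_anti : ∀ x y : ℝ, 0 ≤ x → x < y → f y < f x)
    (Z : Ω → ℝ) (hZ : Measurable Z)
    (hdens : Measure.map Z μ = volume.withDensity (fun z => ENNReal.ofReal (f z)))
    (hmom : Integrable (fun z => z ^ 2 * f z))
    (k₁ k₂ : ℝ) (hk₁ : 0 < k₁) (hk₂ : 0 < k₂)
    (L : ℝ → ℝ) (hL : ∀ z, L z = if 0 ≤ z then k₁ * z else -k₂ * z)
    (C : ℝ) (hC : ∀ c : ℝ, (∫ ω, L (Z ω + C) ∂μ) ≤ ∫ ω, L (Z ω + c) ∂μ) :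
    (variance (fun ω => L (Z ω + C)) μ = variance (fun ω => L (Z ω)) μ ↔ C = 0)
      ∧ (C = 0 ↔ k₁ = k₂) :=
  variance_loss_shift_eq_iff_general μ f hf_nonneg hf_total hf_symm hf_anti Z hZ hdens hmom k₁ k₂
    hk₁ hk₂ L hL C hC
end

section
/- For every x ≥ 0, α(x) := 4 (∫₀ˣ f(t) dt)(∫ₓ^∞ t f(t) dt) − x/2 + 2x (∫₀ˣ f(t) dt)² ≥ 0. -/
open MeasureTheory

/-- If `f` is nonnegative and non-increasing on `[0, ∞)` with `∫₀^∞ f = 1/2`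
and finite first moment, then for every `x ≥ 0`,
`α(x) = 4 (∫₀ˣ f)(∫ₓ^∞ t f(t) dt) − x/2 + 2x (∫₀ˣ f)² ≥ 0`. -/
theorem alpha_nonneg
    (f : ℝ → ℝ) (hf_nonneg : ∀ t, 0 ≤ t → 0 ≤ f t)
    (hf_mono : ∀ x y : ℝ, 0 ≤ x → x ≤ y → f y ≤ f x)
    (hf_int : IntegrableOn f (Set.Ioi 0))
    (hf_total : (∫ t in Set.Ioi (0:ℝ), f t) = 1 / 2)
    (hf_mom : IntegrableOn (fun t => t * f t) (Set.Ioi 0)) :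
    ∀ x : ℝ, 0 ≤ x →
      0 ≤ 4 * (∫ t in (0:ℝ)..x, f t) * (∫ t in Set.Ioi x, t * f t)
            - x / 2 + 2 * x * (∫ t in (0:ℝ)..x, f t) ^ 2 := by
  intro x hx
  rcases eq_or_lt_of_le hx with hx0 | hx0
  · rw [← hx0]; simp
  -- x > 0 from here on
  have hIf : ∀ a c : ℝ, 0 ≤ a → a ≤ c → IntervalIntegrable f volume a c := by
    intro a c ha hac
    rw [intervalIntegrable_iff, Set.uIoc_of_le hac]
    exact hf_int.mono_set (fun t ht => lt_of_le_of_lt ha ht.1)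
  have hIm : ∀ a c : ℝ, 0 ≤ a → a ≤ c → IntervalIntegrable (fun t => t * f t) volume a c := by
    intro a c ha hac
    rw [intervalIntegrable_iff, Set.uIoc_of_le hac]
    exact hf_mom.mono_set (fun t ht => lt_of_le_of_lt ha ht.1)
  set F := ∫ t in (0:ℝ)..x, f t with hF
  set G := ∫ t in Set.Ioi x, f t with hG
  set M := ∫ t in Set.Ioi x, t * f t with hM
  clear_value F G M
  have hF_nonneg : 0 ≤ F := by
    rw [hF]; exact intervalIntegral.integral_nonneg hx (fun t ht => hf_nonneg t ht.1)
  have hG_nonneg : 0 ≤ G := by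
    rw [hG]; exact setIntegral_nonneg measurableSet_Ioi (fun t ht => hf_nonneg t (hx0.trans ht).le)
  have hsplit : F + G = 1 / 2 := by
    have h2 : (∫ t in Set.Ioi (0:ℝ), f t)
        = (∫ t in Set.Ioc 0 x, f t) + ∫ t in Set.Ioi x, f t := by
      rw [← Set.Ioc_union_Ioi_eq_Ioi hx,
        setIntegral_union (Set.Ioc_disjoint_Ioi le_rfl) measurableSet_Ioi
          (hf_int.mono_set Set.Ioc_subset_Ioi_self) (hf_int.mono_set (Set.Ioi_subset_Ioi hx))]
    rw [hF, intervalIntegral.integral_of_le hx]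
    rw [hf_total] at h2
    linarith
  have hxfF : x * f x ≤ F := by
    have h := intervalIntegral.integral_mono_on hx intervalIntegrable_const (hIf 0 x le_rfl hx)
      (fun t ht => hf_mono t x ht.1 ht.2)
    rw [hF]
    simpa using h
  have hF_pos : 0 < F := by
    rcases hF_nonneg.lt_or_eq with h | h
    · exact h
    · exfalso
      have hfx0 : f x = 0 := le_antisymm (by nlinarith) (hf_nonneg x hx)
      have hG0 : G = 0 := by
        rw [hG, setIntegral_congr_fun measurableSet_Ioi
          (fun t (ht : t ∈ Set.Ioi x) =>
            le_antisymm (hfx0 ▸ hf_mono x t hx ht.le) (hf_nonneg t (hx0.trans ht).le))]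
        simp
      rw [← h, hG0] at hsplit
      norm_num at hsplit
  obtain ⟨b, hb⟩ : ∃ b : ℝ, b = x + x * G / F := ⟨_, rfl⟩
  have hxb : x ≤ b := by
    rw [hb]
    have h : 0 ≤ x * G / F := div_nonneg (mul_nonneg hx hG_nonneg) hF_pos.le
    linarith
  have hb0 : 0 < b := lt_of_lt_of_le hx0 hxb
  set A := ∫ t in x..b, f t with hA
  clear_value A
  -- f t ≤ F / x on [x, b]
  have hfle : ∀ t ∈ Set.Icc x b, f t ≤ F / x := by
    intro t ht
    have h1 : f t ≤ f x := hf_mono x t hx ht.1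
    have h2 : f x ≤ F / x := (le_div_iff₀ hx0).mpr (by linarith [hxfF])
    linarith
  -- Step 7 : ∫ (b - t) f ≤ (F/x) * (b-x)^2/2
  have hint_bt : IntervalIntegrable (fun t => (b - t) * f t) volume x b := by
    have heq : (fun t => (b - t) * f t) = fun t => b * f t - t * f t := by
      funext t; ring
    rw [heq]
    exact ((hIf x b hx hxb).const_mul b).sub (hIm x b hx hxb)
  have h7 : (∫ t in x..b, (b - t) * f t) ≤ F / x * ((b - x) ^ 2 / 2) := by
    have hmono : (∫ t in x..b, (b - t) * f t) ≤ ∫ t in x..b, (b - t) * (F / x) := by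
      apply intervalIntegral.integral_mono_on hxb hint_bt
        ((intervalIntegrable_const.sub _root_.intervalIntegral.intervalIntegrable_id).mul_const _)
      intro t ht
      exact mul_le_mul_of_nonneg_left (hfle t ht) (by linarith [ht.2])
    have hcalc : (∫ t in x..b, (b - t) * (F / x)) = F / x * ((b - x) ^ 2 / 2) := by
      rw [intervalIntegral.integral_mul_const,
        intervalIntegral.integral_sub intervalIntegrable_const
          _root_.intervalIntegral.intervalIntegrable_id]
      simp [integral_id]
      ring
    linarith
  have hsub : (∫ t in x..b, (b - t) * f t) = b * A - ∫ t in x..b, t * f t := by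
    have heq : (fun t => (b - t) * f t) = fun t => b * f t - t * f t := by
      funext t; ring
    rw [heq, intervalIntegral.integral_sub ((hIf x b hx hxb).const_mul b)
      (hIm x b hx hxb), intervalIntegral.integral_const_mul, hA]
  -- Step 8 : tail beyond b
  have h8 : b * (∫ t in Set.Ioi b, f t) ≤ ∫ t in Set.Ioi b, t * f t := by
    rw [← integral_const_mul]
    apply setIntegral_mono_on ((hf_int.mono_set (Set.Ioi_subset_Ioi hb0.le)).const_mul b)
      (hf_mom.mono_set (Set.Ioi_subset_Ioi hb0.le)) measurableSet_Ioi
    intro t ht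
    exact mul_le_mul_of_nonneg_right ht.le (hf_nonneg t (hb0.trans ht).le)
  -- splits at b
  have h9 : G = A + ∫ t in Set.Ioi b, f t := by
    rw [hG, ← Set.Ioc_union_Ioi_eq_Ioi hxb,
      setIntegral_union (Set.Ioc_disjoint_Ioi le_rfl) measurableSet_Ioi
        (hf_int.mono_set (fun t ht => hx0.trans ht.1))
        (hf_int.mono_set (fun t ht => hx0.trans (lt_of_le_of_lt hxb ht))),
      hA, intervalIntegral.integral_of_le hxb]
  have h10 : M = (∫ t in x..b, t * f t) + ∫ t in Set.Ioi b, t * f t := by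
    rw [hM, ← Set.Ioc_union_Ioi_eq_Ioi hxb,
      setIntegral_union (Set.Ioc_disjoint_Ioi le_rfl) measurableSet_Ioi
        (hf_mom.mono_set (fun t ht => hx0.trans ht.1))
        (hf_mom.mono_set (fun t ht => hx0.trans (lt_of_le_of_lt hxb ht))),
      intervalIntegral.integral_of_le hxb]
  -- combine : M ≥ b*G - (F/x)*(b-x)^2/2
  have hMlow : b * G - F / x * ((b - x) ^ 2 / 2) ≤ M := by
    have := h7
    rw [hsub] at this
    -- b*A - ∫ t f ≤ F/x * (b-x)^2/2
    -- M = ∫_x^b t f + tail ≥ ∫_x^b t f + b*(G - A)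
    have htail : b * (G - A) ≤ ∫ t in Set.Ioi b, t * f t := by
      have : (∫ t in Set.Ioi b, f t) = G - A := by linarith [h9]
      rw [← this]; exact h8
    nlinarith [h10]
  have hcomp : F * (b * G - F / x * ((b - x) ^ 2 / 2)) = x * F * G + x * G ^ 2 / 2 := by
    rw [hb]
    field_simp
    ring
  have hM2 : x * F * G + x * G ^ 2 / 2 ≤ F * M := by
    calc x * F * G + x * G ^ 2 / 2 = F * (b * G - F / x * ((b - x) ^ 2 / 2)) := hcomp.symm
    _ ≤ F * M := mul_le_mul_of_nonneg_left hMlow hF_pos.le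
  nlinarith [hM2, hsplit, mul_le_mul_of_nonneg_left hsplit.le hx, sq_nonneg (F + G)]
end

section
/- If in addition f is strictly decreasing on [0, ∞), then for every x > 0 one has α(x) := 4 (∫₀ˣ f(t) dt)(∫ₓ^∞ t f(t) dt) − x/2 + 2x (∫₀ˣ f(t) dt)² > 0. -/
open MeasureTheory Set

/-! Write `F = ∫₀ˣ f`, `G = ∫ₓ^∞ f` and `R = ∫ₓ^∞ (t - x) f(t) dt`. Since `∫ₓ^∞ t f = x G + R` and
`F + G = 1/2`, we get `α(x) = 2 (2 F R - x G²)`. Strict monotonicity gives `F > x f(x)`. Since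
`0 ≤ f ≤ f(x)` on `(x, ∞)`, the first moment `R` is at least that of the bathtub profile
`f(x) · 1_[x, x + G / f(x)]` with the same mass, that is `R ≥ G² / (2 f(x))`. As `G > 0`, these
combine to `x G² < 2 F R`. -/

theorem AntitoneOn.sub_mul_le_intervalIntegral {f : ℝ → ℝ} {a b : ℝ}
    (hf : AntitoneOn f (Icc a b)) (hab : a ≤ b) :
    (b - a) * f b ≤ ∫ t in a..b, f t := by
  have hint : IntervalIntegrable f volume a b := (uIcc_of_le hab ▸ hf).intervalIntegrable
  calc (b - a) * f b = ∫ _ in a..b, f b := by simp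
    _ ≤ ∫ t in a..b, f t := intervalIntegral.integral_mono_on hab intervalIntegrable_const hint
        fun t ht => hf ht ⟨hab, le_rfl⟩ ht.2

theorem StrictAntiOn.sub_mul_lt_intervalIntegral {f : ℝ → ℝ} {a b : ℝ}
    (hf : StrictAntiOn f (Icc a b)) (hab : a < b) :
    (b - a) * f b < ∫ t in a..b, f t := by
  set m := (a + b) / 2 with hm
  have ham : a < m := by linarith
  have hmb : m < b := by linarith
  have hleft :=
    (hf.antitoneOn.mono (Icc_subset_Icc_right hmb.le)).sub_mul_le_intervalIntegral ham.le
  have hright :=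
    (hf.antitoneOn.mono (Icc_subset_Icc_left ham.le)).sub_mul_le_intervalIntegral hmb.le
  have hfm : f b < f m := hf ⟨ham.le, hmb.le⟩ ⟨hab.le, le_rfl⟩ hmb
  rw [← intervalIntegral.integral_add_adjacent_intervals
    (hf.antitoneOn.mono (uIcc_of_le ham.le ▸ Icc_subset_Icc_right hmb.le)).intervalIntegrable
    (hf.antitoneOn.mono (uIcc_of_le hmb.le ▸ Icc_subset_Icc_left ham.le)).intervalIntegrable]
  nlinarith

theorem setIntegral_Ioi_pos {f : ℝ → ℝ} {x : ℝ} (hpos : ∀ t ∈ Ioi x, 0 < f t)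
    (hf : IntegrableOn f (Ioi x)) : 0 < ∫ t in Ioi x, f t := by
  rw [setIntegral_pos_iff_support_of_nonneg_ae
    ((ae_restrict_iff' measurableSet_Ioi).2 (ae_of_all _ fun t ht => (hpos t ht).le)) hf,
    inter_eq_right.2 fun t ht => Function.mem_support.2 (hpos t ht).ne']
  simp

theorem mul_setIntegral_Ioi_sub_le_moment {g : ℝ → ℝ} {x c a : ℝ}
    (hg_nonneg : ∀ t ∈ Ioi x, 0 ≤ g t) (hg_le : ∀ t ∈ Ioi x, g t ≤ c) (ha : 0 ≤ a)
    (hg : IntegrableOn g (Ioi x)) (hmom : IntegrableOn (fun t => (t - x) * g t) (Ioi x)) :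
    a * (∫ t in Ioi x, g t) - c * a ^ 2 / 2 ≤ ∫ t in Ioi x, (t - x) * g t := by
  have hxa : x ≤ x + a := by linarith
  have hIoi : Ioi (x + a) ⊆ Ioi x := Ioi_subset_Ioi hxa
  have hg_near : IntervalIntegrable g volume x (x + a) :=
    (intervalIntegrable_iff_integrableOn_Ioc_of_le hxa).2 (hg.mono_set Ioc_subset_Ioi_self)
  have hmom_near : IntervalIntegrable (fun t => (t - x) * g t) volume x (x + a) :=
    (intervalIntegrable_iff_integrableOn_Ioc_of_le hxa).2 (hmom.mono_set Ioc_subset_Ioi_self)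
  have hlin : IntervalIntegrable (fun t => (t - x - a) * c) volume x (x + a) := by
    apply Continuous.intervalIntegrable; fun_prop
  have hnear : a * (∫ t in x..x + a, g t) - c * a ^ 2 / 2 ≤ ∫ t in x..x + a, (t - x) * g t := by
    have heval : ∫ t in x..x + a, (a * g t + (t - x - a) * c)
        = a * (∫ t in x..x + a, g t) - c * a ^ 2 / 2 := by
      rw [intervalIntegral.integral_add (hg_near.const_mul a) hlin,
        intervalIntegral.integral_const_mul, intervalIntegral.integral_mul_const]
      simp only [sub_sub, intervalIntegral.integral_comp_sub_right fun t => t, integral_id]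
      ring
    rw [← heval]
    refine intervalIntegral.integral_mono_on_of_le_Ioo hxa ((hg_near.const_mul a).add hlin)
      hmom_near fun t ht => ?_
    -- `(t - x - a) (g t - c) ≥ 0`, both factors being nonpositive
    have := hg_le t ht.1
    nlinarith [ht.2]
  have hfar : a * ∫ t in Ioi (x + a), g t ≤ ∫ t in Ioi (x + a), (t - x) * g t := by
    rw [← integral_const_mul]
    refine setIntegral_mono_on ((hg.mono_set hIoi).const_mul a) (hmom.mono_set hIoi)
      measurableSet_Ioi fun t ht => ?_
    have := hg_nonneg t (hIoi ht)
    nlinarith [mem_Ioi.1 ht]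
  rw [← intervalIntegral.integral_interval_add_Ioi hg (hg.mono_set hIoi),
    ← intervalIntegral.integral_interval_add_Ioi hmom (hmom.mono_set hIoi), mul_add]
  linarith

theorem sq_setIntegral_Ioi_le_two_mul_moment {g : ℝ → ℝ} {x c : ℝ} (hc : 0 < c)
    (hg_nonneg : ∀ t ∈ Ioi x, 0 ≤ g t) (hg_le : ∀ t ∈ Ioi x, g t ≤ c)
    (hg : IntegrableOn g (Ioi x)) (hmom : IntegrableOn (fun t => (t - x) * g t) (Ioi x)) :
    (∫ t in Ioi x, g t) ^ 2 ≤ 2 * c * ∫ t in Ioi x, (t - x) * g t := by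
  have hG : 0 ≤ ∫ t in Ioi x, g t := setIntegral_nonneg measurableSet_Ioi hg_nonneg
  have := mul_setIntegral_Ioi_sub_le_moment hg_nonneg hg_le (div_nonneg hG hc.le) hg hmom
  calc (∫ t in Ioi x, g t) ^ 2
      = 2 * c * ((∫ t in Ioi x, g t) / c * (∫ t in Ioi x, g t)
        - c * ((∫ t in Ioi x, g t) / c) ^ 2 / 2) := by field_simp; ring
    _ ≤ 2 * c * ∫ t in Ioi x, (t - x) * g t := by gcongr

theorem alpha_pos_of_strictAnti_general
    (f : ℝ → ℝ) (hf_nonneg : ∀ t, 0 ≤ t → 0 ≤ f t)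
    (hf_anti : ∀ x y : ℝ, 0 ≤ x → x < y → f y < f x)
    (hf_int : IntegrableOn f (Set.Ioi 0))
    (hf_total : (∫ t in Set.Ioi (0:ℝ), f t) = 1 / 2)
    (hf_mom : IntegrableOn (fun t => t * f t) (Set.Ioi 0)) :
    ∀ x : ℝ, 0 < x →
      0 < 4 * (∫ t in (0:ℝ)..x, f t) * (∫ t in Set.Ioi x, t * f t)
            - x / 2 + 2 * x * (∫ t in (0:ℝ)..x, f t) ^ 2 := by
  intro x hx
  have hanti : StrictAntiOn f (Ici 0) := fun a ha _ _ hab => hf_anti a _ ha hab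
  have hpos : ∀ t, 0 ≤ t → 0 < f t := fun t ht =>
    (hf_nonneg (t + 1) (by linarith)).trans_lt (hf_anti t (t + 1) ht (lt_add_one t))
  have hIoi : Ioi x ⊆ Ioi 0 := Ioi_subset_Ioi hx.le
  have hf_int_x := hf_int.mono_set hIoi
  have hmom_x : IntegrableOn (fun t => (t - x) * f t) (Ioi x) := by
    refine ((hf_mom.mono_set hIoi).sub (hf_int_x.const_mul x)).congr_fun (fun t _ => ?_)
      measurableSet_Ioi
    simp only [Pi.sub_apply]
    ring
  set F := ∫ t in (0:ℝ)..x, f t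
  set G := ∫ t in Ioi x, f t
  set R := ∫ t in Ioi x, (t - x) * f t
  have hFG : F + G = 1 / 2 := hf_total ▸ intervalIntegral.integral_interval_add_Ioi hf_int hf_int_x
  have hT : ∫ t in Ioi x, t * f t = x * G + R := by
    rw [← integral_const_mul, ← integral_add (hf_int_x.const_mul x) hmom_x]
    congr with t
    ring
  have hF : x * f x < F := by
    simpa using (hanti.mono Icc_subset_Ici_self).sub_mul_lt_intervalIntegral hx
  have hG : 0 < G := setIntegral_Ioi_pos (fun t ht => hpos t (hx.trans ht).le) hf_int_x
  have hR : G ^ 2 ≤ 2 * f x * R := sq_setIntegral_Ioi_le_two_mul_moment (hpos x hx.le)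
    (fun t ht => hf_nonneg t (hx.trans ht).le)
    (fun t ht => hanti.antitoneOn hx.le (hx.trans ht).le (le_of_lt ht)) hf_int_x hmom_x
  have hkey : x * G ^ 2 < 2 * F * R := by
    have hF_pos : 0 < F := (mul_pos hx (hpos x hx.le)).trans hF
    refine lt_of_mul_lt_mul_left ?_ (hpos x hx.le).le
    calc f x * (x * G ^ 2) = x * f x * G ^ 2 := by ring
      _ < F * G ^ 2 := by gcongr
      _ ≤ F * (2 * f x * R) := by gcongr
      _ = f x * (2 * F * R) := by ring
  have hx_half : x / 2 = 2 * x * (F + G) ^ 2 := by rw [hFG]; ring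
  rw [hT, hx_half]
  linarith

/-- If `f` is nonnegative, strictly decreasing on `[0, ∞)`, with `∫₀^∞ f = 1/2`
and finite first moment, then for every `x > 0`,
`α(x) = 4 (∫₀ˣ f)(∫ₓ^∞ t f(t) dt) − x/2 + 2x (∫₀ˣ f)² > 0`. -/
theorem alpha_pos_of_strictAnti
    (f : ℝ → ℝ) (hf_nonneg : ∀ t, 0 ≤ t → 0 ≤ f t)
    (hf_mono : ∀ x y : ℝ, 0 ≤ x → x ≤ y → f y ≤ f x)
    (hf_anti : ∀ x y : ℝ, 0 ≤ x → x < y → f y < f x)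
    (hf_int : IntegrableOn f (Set.Ioi 0))
    (hf_total : (∫ t in Set.Ioi (0:ℝ), f t) = 1 / 2)
    (hf_mom : IntegrableOn (fun t => t * f t) (Set.Ioi 0)) :
    ∀ x : ℝ, 0 < x →
      0 < 4 * (∫ t in (0:ℝ)..x, f t) * (∫ t in Set.Ioi x, t * f t)
            - x / 2 + 2 * x * (∫ t in (0:ℝ)..x, f t) ^ 2 :=
  alpha_pos_of_strictAnti_general f hf_nonneg hf_anti hf_int hf_total hf_mom
end

section
/- One has α(x) := 4 (∫₀ˣ f(t) dt)(∫ₓ^∞ t f(t) dt) − x/2 + 2x (∫₀ˣ f(t) dt)² = 0 for all x ≥ 0 if and only if there exists a > 0 such that f(t) = 1/(2a) for 0 ≤ t ≤ a and f(t) = 0 for t > a (almost everywhere), i.e. f is the density of a continuous uniform distribution on [0, a] scaled to total mass 1/2. -/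
/-!
Write `F x = ∫₀ˣ f` and `M x = ∫ₓ^∞ t f(t) dt`. At every `x ≥ 0` both have right derivatives,
`F' = p` and `M' = -x p` with `p` the right limit of `f` at `x`. Differentiating `α ≡ 0` from the
right gives `4 p M = 1/2 - 2 F²`, and comparing with `x (1/2 - 2 F²) = 4 F M` yields
`M (x p - F) = 0`. Where `F x < 1/2` the identity `α = 0` forces `M x ≠ 0`, so `F/x` has vanishing
right derivative there and `F x = c x`; continuity of `F` and the intermediate value theorem then
give `F x = min (c x) (1/2)`, and monotonicity of `f` pins down `f = c` on `(0, 1/(2c))` and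
`f = 0` beyond. The converse is a direct computation.
-/

open MeasureTheory Set Filter Topology

theorem hasDerivWithinAt_intervalIntegral_Ici_of_tendsto {g : ℝ → ℝ} {a x c : ℝ}
    (hg : IntegrableOn g (Ioi a)) (hax : a ≤ x) (hc : Tendsto g (𝓝[>] x) (𝓝 c)) :
    HasDerivWithinAt (fun u => ∫ t in a..u, g t) c (Ici x) x :=
  intervalIntegral.integral_hasDerivWithinAt_of_tendsto_ae_right
    ((intervalIntegrable_iff_integrableOn_Ioc_of_le hax).2 (hg.mono_set Ioc_subset_Ioi_self))
    ⟨Ioi a, mem_of_superset self_mem_nhdsWithin (Ioi_subset_Ioi hax), hg.aestronglyMeasurable⟩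
    (hc.mono_left inf_le_left)

theorem hasDerivWithinAt_integral_Ioi_of_tendsto {g : ℝ → ℝ} {a x c : ℝ}
    (hg : IntegrableOn g (Ioi a)) (hax : a ≤ x) (hc : Tendsto g (𝓝[>] x) (𝓝 c)) :
    HasDerivWithinAt (fun u => ∫ t in Ioi u, g t) (-c) (Ici x) x := by
  have heq : ∀ u ∈ Ici x, ∫ t in Ioi u, g t = (∫ t in Ioi a, g t) - ∫ t in a..u, g t :=
    fun u hu => by rw [← intervalIntegral.integral_Ioi_sub_Ioi hg (hax.trans hu), sub_sub_cancel]
  exact ((hasDerivWithinAt_intervalIntegral_Ici_of_tendsto hg hax hc).const_sub _).congr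
    heq (heq x self_mem_Ici)

theorem eq_mul_of_hasDerivWithinAt_of_alpha_eq_zero {F M : ℝ → ℝ} {x p : ℝ}
    (hF : HasDerivWithinAt F p (Ici x) x) (hM : HasDerivWithinAt M (-(x * p)) (Ici x) x)
    (hα : ∀ u ∈ Ici x, 4 * F u * M u - u / 2 + 2 * u * F u ^ 2 = 0) (hM0 : M x ≠ 0) :
    F x = x * p := by
  have hd := (((hF.const_mul 4).mul hM).sub ((hasDerivWithinAt_id x _).div_const 2)).add
    (((hasDerivWithinAt_id x _).const_mul 2).mul (hF.pow 2))
  have h0 : HasDerivWithinAt (fun u => 4 * F u * M u - u / 2 + 2 * u * F u ^ 2) 0 (Ici x) x :=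
    (hasDerivWithinAt_const x _ 0).congr hα (hα x self_mem_Ici)
  have hderiv := (uniqueDiffWithinAt_Ici x).eq_deriv _ hd h0
  simp only [id, Pi.pow_apply, Nat.cast_ofNat, Nat.add_one_sub_one, pow_one] at hderiv
  refine mul_left_cancel₀ hM0 ?_
  linear_combination (hα x self_mem_Ici - x * hderiv) / 4

theorem mul_le_intervalIntegral_of_antitoneOn {g : ℝ → ℝ} {x y : ℝ}
    (hg : AntitoneOn g (Icc x y)) (hxy : x ≤ y) : (y - x) * g y ≤ ∫ t in x..y, g t := by
  rw [← smul_eq_mul, ← intervalIntegral.integral_const]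
  exact intervalIntegral.integral_mono_on hxy intervalIntegrable_const
    (hg.mono (uIcc_of_le hxy).le).intervalIntegrable fun t ht => hg ht ⟨hxy, le_rfl⟩ ht.2

theorem intervalIntegral_le_mul_of_antitoneOn {g : ℝ → ℝ} {x y : ℝ}
    (hg : AntitoneOn g (Icc x y)) (hxy : x ≤ y) : ∫ t in x..y, g t ≤ (y - x) * g x := by
  rw [← smul_eq_mul, ← intervalIntegral.integral_const]
  exact intervalIntegral.integral_mono_on hxy
    (hg.mono (uIcc_of_le hxy).le).intervalIntegrable intervalIntegrable_const
    fun t ht => hg ⟨le_rfl, hxy⟩ ht ht.1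

theorem eq_min_mul_of_eq_mul_of_lt {F : ℝ → ℝ} {c L x : ℝ} (hx : 0 ≤ x)
    (hcont : ContinuousOn F (Icc 0 x)) (hF0 : F 0 = 0) (hL : 0 < L) (hFL : F x ≤ L)
    (hlin : ∀ y ∈ Icc 0 x, F y < L → F y = c * y) : F x = min (c * x) L := by
  rcases hFL.lt_or_eq with hlt | heq
  · have hFx := hlin x ⟨hx, le_rfl⟩ hlt
    rw [hFx] at hlt ⊢
    exact (min_eq_left hlt.le).symm
  rw [heq, eq_comm, min_eq_right_iff]
  by_contra! hcx
  have hmax : max (c * x) 0 < L := max_lt hcx hL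
  -- the midpoint of `max (c * x) 0` and `L` is a value of `F` below `L` that lies off the line
  obtain ⟨y, hy, hFy⟩ : (max (c * x) 0 + L) / 2 ∈ F '' Icc 0 x :=
    intermediate_value_Icc hx hcont ⟨by linarith [le_max_right (c * x) 0], by linarith⟩
  have hcy : c * y ≤ max (c * x) 0 := by
    rcases le_total 0 c with hc | hc
    · exact le_max_of_le_left (mul_le_mul_of_nonneg_left hy.2 hc)
    · exact le_max_of_le_right (mul_nonpos_of_nonpos_of_nonneg hc hy.1)
  have := hlin y hy (by linarith)
  linarith

noncomputable def alpha (f : ℝ → ℝ) (x : ℝ) : ℝ :=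
  4 * (∫ t in (0:ℝ)..x, f t) * (∫ t in Ioi x, t * f t) - x / 2 + 2 * x * (∫ t in (0:ℝ)..x, f t) ^ 2

section Density

variable {f : ℝ → ℝ}

theorem intervalIntegrable_of_antitoneOn_Ici (hmono : AntitoneOn f (Ici 0)) {x : ℝ}
    (hx : 0 ≤ x) : IntervalIntegrable f volume 0 x :=
  (hmono.mono fun t ht => by simp_all).intervalIntegrable

theorem continuousOn_primitive_of_antitoneOn_Ici (hmono : AntitoneOn f (Ici 0)) {x : ℝ}
    (hx : 0 ≤ x) : ContinuousOn (fun u => ∫ t in (0:ℝ)..u, f t) (Icc 0 x) := by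
  simpa [uIcc_of_le hx] using intervalIntegral.continuousOn_primitive_interval'
    (intervalIntegrable_of_antitoneOn_Ici hmono hx) left_mem_uIcc

theorem primitive_mono (hf_nonneg : ∀ t, 0 ≤ t → 0 ≤ f t) (hmono : AntitoneOn f (Ici 0))
    {x y : ℝ} (hx : 0 ≤ x) (hxy : x ≤ y) : ∫ t in (0:ℝ)..x, f t ≤ ∫ t in (0:ℝ)..y, f t :=
  intervalIntegral.integral_mono_interval le_rfl hx hxy
    ((ae_restrict_iff' measurableSet_Ioc).2 (.of_forall fun t ht => hf_nonneg t ht.1.le))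
    (intervalIntegrable_of_antitoneOn_Ici hmono (hx.trans hxy))

theorem primitive_le_integral_Ioi (hf_nonneg : ∀ t, 0 ≤ t → 0 ≤ f t)
    (hf_int : IntegrableOn f (Ioi 0)) {x : ℝ} (hx : 0 ≤ x) :
    ∫ t in (0:ℝ)..x, f t ≤ ∫ t in Ioi 0, f t := by
  rw [intervalIntegral.integral_of_le hx]
  exact setIntegral_mono_set hf_int
    ((ae_restrict_iff' measurableSet_Ioi).2 (.of_forall fun t ht => hf_nonneg t (le_of_lt ht)))
    Ioc_subset_Ioi_self.eventuallyLE

theorem exists_hasDerivWithinAt_primitive_and_moment (hmono : AntitoneOn f (Ici 0))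
    (hf_int : IntegrableOn f (Ioi 0)) (hf_mom : IntegrableOn (fun t => t * f t) (Ioi 0))
    {x : ℝ} (hx : 0 ≤ x) :
    ∃ p, HasDerivWithinAt (fun u => ∫ t in (0:ℝ)..u, f t) p (Ici x) x ∧
      HasDerivWithinAt (fun u => ∫ t in Ioi u, t * f t) (-(x * p)) (Ici x) x := by
  have hlim : Tendsto f (𝓝[>] x) (𝓝 (sSup (f '' Ioi x))) :=
    (hmono.mono (Ioi_subset_Ici hx)).tendsto_nhdsGT
      ⟨f x, by rintro _ ⟨t, ht, rfl⟩; exact hmono hx (hx.trans ht.le) ht.le⟩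
  exact ⟨_, hasDerivWithinAt_intervalIntegral_Ici_of_tendsto hf_int hx hlim,
    hasDerivWithinAt_integral_Ioi_of_tendsto hf_mom hx
      ((tendsto_id.mono_left nhdsWithin_le_nhds).mul hlim)⟩

theorem primitive_div_eq_of_alpha_eq_zero (hf_nonneg : ∀ t, 0 ≤ t → 0 ≤ f t)
    (hmono : AntitoneOn f (Ici 0)) (hf_int : IntegrableOn f (Ioi 0))
    (hf_mom : IntegrableOn (fun t => t * f t) (Ioi 0)) (hα : ∀ x, 0 ≤ x → alpha f x = 0)
    {x y : ℝ} (hx : 0 < x) (hxy : x ≤ y) (hy : ∫ t in (0:ℝ)..y, f t < 1 / 2) :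
    (∫ t in (0:ℝ)..y, f t) / y = (∫ t in (0:ℝ)..x, f t) / x := by
  have hcont : ContinuousOn (fun u => (∫ t in (0:ℝ)..u, f t) / u) (Icc x y) := by
    refine ContinuousOn.div ?_ continuousOn_id fun u hu => (hx.trans_le hu.1).ne'
    exact (continuousOn_primitive_of_antitoneOn_Ici hmono (hx.le.trans hxy)).mono
      (Icc_subset_Icc_left hx.le)
  refine constant_of_has_deriv_right_zero hcont (fun z hz => ?_) y ⟨hxy, le_rfl⟩
  have hz0 : 0 < z := hx.trans_le hz.1
  obtain ⟨p, hF, hM⟩ := exists_hasDerivWithinAt_primitive_and_moment hmono hf_int hf_mom hz0.le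
  have hFz : (∫ t in (0:ℝ)..z, f t) ^ 2 < 1 / 4 := by
    have hle := (primitive_mono hf_nonneg hmono hz0.le hz.2.le).trans_lt hy
    have hnonneg : 0 ≤ ∫ t in (0:ℝ)..z, f t :=
      intervalIntegral.integral_nonneg hz0.le fun t ht => hf_nonneg t ht.1
    nlinarith
  -- if the tail moment vanished, `α z` would be `z (2 F² - 1/2) < 0`
  have hM0 : ∫ t in Ioi z, t * f t ≠ 0 := by
    intro h0
    have := hα z hz0.le
    rw [alpha, h0] at this
    nlinarith [mul_pos hz0 (sub_pos.2 hFz)]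
  have hp := eq_mul_of_hasDerivWithinAt_of_alpha_eq_zero hF hM
    (fun u hu => hα u (hz0.le.trans hu)) hM0
  refine (hF.div (hasDerivWithinAt_id z _) hz0.ne').congr_deriv ?_
  simp only [id]
  rw [hp]
  ring

theorem exists_primitive_eq_mul_of_alpha_eq_zero (hf_nonneg : ∀ t, 0 ≤ t → 0 ≤ f t)
    (hmono : AntitoneOn f (Ici 0)) (hf_int : IntegrableOn f (Ioi 0))
    (hf_mom : IntegrableOn (fun t => t * f t) (Ioi 0)) (hα : ∀ x, 0 ≤ x → alpha f x = 0) :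
    ∃ c, ∀ x, 0 ≤ x → ∫ t in (0:ℝ)..x, f t < 1 / 2 → ∫ t in (0:ℝ)..x, f t = c * x := by
  have hdiv := @primitive_div_eq_of_alpha_eq_zero f hf_nonneg hmono hf_int hf_mom hα
  by_cases h : ∃ x₀, 0 < x₀ ∧ ∫ t in (0:ℝ)..x₀, f t < 1 / 2
  · obtain ⟨x₀, hx₀, hFx₀⟩ := h
    refine ⟨(∫ t in (0:ℝ)..x₀, f t) / x₀, fun x hx hFx => ?_⟩
    rcases hx.eq_or_lt with rfl | hx
    · simp
    rcases le_total x x₀ with hle | hle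
    · rw [hdiv hx hle hFx₀, div_mul_cancel₀ _ hx.ne']
    · rw [← hdiv hx₀ hle hFx, div_mul_cancel₀ _ hx.ne']
  · push Not at h
    refine ⟨0, fun x hx hFx => ?_⟩
    rcases hx.eq_or_lt with rfl | hx
    · simp
    · exact absurd (h x hx) hFx.not_ge

theorem exists_primitive_eq_uniform_of_alpha_eq_zero (hf_nonneg : ∀ t, 0 ≤ t → 0 ≤ f t)
    (hmono : AntitoneOn f (Ici 0)) (hf_int : IntegrableOn f (Ioi 0))
    (hf_total : ∫ t in Ioi (0:ℝ), f t = 1 / 2)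
    (hf_mom : IntegrableOn (fun t => t * f t) (Ioi 0)) (hα : ∀ x, 0 ≤ x → alpha f x = 0) :
    ∃ a, 0 < a ∧ ∀ x, 0 ≤ x → ∫ t in (0:ℝ)..x, f t = min x a / (2 * a) := by
  obtain ⟨c, hc⟩ := exists_primitive_eq_mul_of_alpha_eq_zero hf_nonneg hmono hf_int hf_mom hα
  have hmin : ∀ x, 0 ≤ x → ∫ t in (0:ℝ)..x, f t = min (c * x) (1 / 2) := fun x hx =>
    eq_min_mul_of_eq_mul_of_lt hx (continuousOn_primitive_of_antitoneOn_Ici hmono hx)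
      intervalIntegral.integral_same (by norm_num)
      (hf_total ▸ primitive_le_integral_Ioi hf_nonneg hf_int hx)
      fun y hy => hc y hy.1
  have hc0 : 0 < c := by
    by_contra! hc0
    have hlim := intervalIntegral_tendsto_integral_Ioi 0 hf_int tendsto_id
    rw [hf_total] at hlim
    obtain ⟨x, hFx, hx⟩ :=
      ((hlim.eventually (lt_mem_nhds (by norm_num : (1:ℝ) / 4 < 1 / 2))).and
        (eventually_ge_atTop 0)).exists
    dsimp only [id] at hFx
    have := hmin x hx ▸ min_le_left (c * x) (1 / 2)
    nlinarith
  refine ⟨1 / (2 * c), by positivity, fun x hx => ?_⟩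
  rw [hmin x hx, show min x (1 / (2 * c)) / (2 * (1 / (2 * c))) = c * min x (1 / (2 * c)) by
    field_simp, mul_min_of_nonneg _ _ hc0.le]
  field_simp

theorem eq_uniform_of_primitive_eq (hf_nonneg : ∀ t, 0 ≤ t → 0 ≤ f t)
    (hmono : AntitoneOn f (Ici 0)) {a : ℝ} (ha : 0 < a)
    (hF : ∀ x, 0 ≤ x → ∫ t in (0:ℝ)..x, f t = min x a / (2 * a)) {t : ℝ} (ht : 0 < t)
    (hta : t ≠ a) : f t = if t ≤ a then 1 / (2 * a) else 0 := by
  have hincr : ∀ x y, 0 ≤ x → x ≤ y → ∫ s in x..y, f s = (min y a - min x a) / (2 * a) :=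
    fun x y hx hxy => by
      rw [← intervalIntegral.integral_interval_sub_left
        (intervalIntegrable_of_antitoneOn_Ici hmono (hx.trans hxy))
        (intervalIntegrable_of_antitoneOn_Ici hmono hx), hF y (hx.trans hxy), hF x hx, sub_div]
  have hanti : ∀ x y, 0 ≤ x → AntitoneOn f (Icc x y) := fun x y hx =>
    hmono.mono fun s hs => hx.trans hs.1
  rcases hta.lt_or_gt with hlt | hgt
  · rw [if_pos hlt.le]
    have hup := mul_le_intervalIntegral_of_antitoneOn (hanti 0 t le_rfl) ht.le
    have hlow := intervalIntegral_le_mul_of_antitoneOn (hanti t a ht.le) hlt.le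
    rw [hincr 0 t le_rfl ht.le, min_eq_left hlt.le, min_eq_left ha.le] at hup
    rw [hincr t a ht.le hlt.le, min_eq_left hlt.le, min_self] at hlow
    have h2a : 0 < 2 * a := by positivity
    refine le_antisymm ?_ ?_
    · rw [le_div_iff₀ h2a] at hup ⊢
      nlinarith
    · rw [div_le_iff₀ h2a] at hlow ⊢
      nlinarith
  · rw [if_neg hgt.not_ge]
    have hup := mul_le_intervalIntegral_of_antitoneOn (hanti a t ha.le) hgt.le
    rw [hincr a t ha.le hgt.le, min_eq_right hgt.le, min_self, sub_self, zero_div] at hup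
    exact le_antisymm (nonpos_of_mul_nonpos_right hup (sub_pos.2 hgt)) (hf_nonneg t ht.le)

end Density

theorem ae_restrict_Ici_zero_of_forall_pos_ne {p : ℝ → Prop} {a : ℝ}
    (h : ∀ t, 0 < t → t ≠ a → p t) : ∀ᵐ t ∂(volume.restrict (Ici (0:ℝ))), p t := by
  rw [← Measure.restrict_congr_set Ioi_ae_eq_Ici, ae_restrict_iff' measurableSet_Ioi]
  filter_upwards [measure_eq_zero_iff_ae_notMem.1 (measure_singleton a)] with t hta ht
    using h t ht hta

section Uniform

variable {f : ℝ → ℝ} {a x : ℝ}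

theorem primitive_eq_of_ae_eq_uniform (ha : 0 < a) (hx : 0 ≤ x)
    (hae : ∀ᵐ t ∂(volume.restrict (Ici (0:ℝ))), f t = if t ≤ a then 1 / (2 * a) else 0) :
    ∫ t in (0:ℝ)..x, f t = min x a / (2 * a) := by
  have hind : (fun t : ℝ => if t ≤ a then 1 / (2 * a) else 0) =
      (Iic a).indicator fun _ => 1 / (2 * a) := by
    ext t; simp [indicator_apply]
  rw [intervalIntegral.integral_of_le hx,
    integral_congr_ae (ae_restrict_of_ae_restrict_of_subset (fun t ht => ht.1.le) hae), hind,
    setIntegral_indicator measurableSet_Iic, Ioc_inter_Iic, setIntegral_const,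
    Real.volume_real_Ioc_of_le (le_min hx ha.le), smul_eq_mul, sub_zero, mul_one_div]

theorem integral_Ioi_mul_eq_of_ae_eq_uniform (ha : 0 < a) (hx : 0 ≤ x)
    (hae : ∀ᵐ t ∂(volume.restrict (Ici (0:ℝ))), f t = if t ≤ a then 1 / (2 * a) else 0) :
    ∫ t in Ioi x, t * f t = (a ^ 2 - min x a ^ 2) / (4 * a) := by
  have hae' : ∀ᵐ t ∂(volume.restrict (Ioi x)),
      t * f t = (Iic a).indicator (fun t => t * (1 / (2 * a))) t := by
    filter_upwards [ae_restrict_of_ae_restrict_of_subset (fun t ht => hx.trans (le_of_lt ht)) hae]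
      with t ht
    simp [ht, indicator_apply]
  have hIoc : Ioc x a = Ioc (min x a) a := by
    rcases le_total x a with h | h
    · rw [min_eq_left h]
    · rw [min_eq_right h, Ioc_self, Ioc_eq_empty_of_le h]
  rw [integral_congr_ae hae', setIntegral_indicator measurableSet_Iic, Ioi_inter_Iic, hIoc,
    ← intervalIntegral.integral_of_le (min_le_right x a), intervalIntegral.integral_mul_const,
    integral_id]
  field_simp
  ring

theorem alpha_eq_zero_of_ae_eq_uniform (ha : 0 < a) (hx : 0 ≤ x)
    (hae : ∀ᵐ t ∂(volume.restrict (Ici (0:ℝ))), f t = if t ≤ a then 1 / (2 * a) else 0) :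
    alpha f x = 0 := by
  rw [alpha, primitive_eq_of_ae_eq_uniform ha hx hae,
    integral_Ioi_mul_eq_of_ae_eq_uniform ha hx hae]
  rcases le_total x a with h | h
  · rw [min_eq_left h]
    field_simp
    ring
  · rw [min_eq_right h]
    field_simp
    ring

end Uniform

/-- If `f` is nonnegative and non-increasing on `[0, ∞)` with `∫₀^∞ f = 1/2`
and finite first moment, then
`α(x) = 4 (∫₀ˣ f)(∫ₓ^∞ t f(t) dt) − x/2 + 2x (∫₀ˣ f)² = 0` for all `x ≥ 0`
iff `f` is (a.e. on `[0, ∞)`) the density `1/(2a)` of a uniform distribution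
on `[0, a]` scaled to total mass `1/2`, for some `a > 0`. -/
theorem alpha_eq_zero_iff_uniform
    (f : ℝ → ℝ) (hf_nonneg : ∀ t, 0 ≤ t → 0 ≤ f t)
    (hf_mono : ∀ x y : ℝ, 0 ≤ x → x ≤ y → f y ≤ f x)
    (hf_int : IntegrableOn f (Set.Ioi 0))
    (hf_total : (∫ t in Set.Ioi (0:ℝ), f t) = 1 / 2)
    (hf_mom : IntegrableOn (fun t => t * f t) (Set.Ioi 0)) :
    (∀ x : ℝ, 0 ≤ x →
        4 * (∫ t in (0:ℝ)..x, f t) * (∫ t in Set.Ioi x, t * f t)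
          - x / 2 + 2 * x * (∫ t in (0:ℝ)..x, f t) ^ 2 = 0)
      ↔ ∃ a : ℝ, 0 < a ∧
          ∀ᵐ t ∂(volume.restrict (Set.Ici (0:ℝ))),
            f t = if t ≤ a then 1 / (2 * a) else 0 := by
  have hmono : AntitoneOn f (Ici 0) := fun x hx y _ hxy => hf_mono x y hx hxy
  constructor
  · intro hα
    obtain ⟨a, ha, hF⟩ :=
      exists_primitive_eq_uniform_of_alpha_eq_zero hf_nonneg hmono hf_int hf_total hf_mom hα
    exact ⟨a, ha, ae_restrict_Ici_zero_of_forall_pos_ne fun t ht hta =>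
      eq_uniform_of_primitive_eq hf_nonneg hmono ha hF ht hta⟩
  · rintro ⟨a, ha, hae⟩ x hx
    exact alpha_eq_zero_of_ae_eq_uniform ha hx hae
end

section
/- Fix x ≥ 0 with f(x) > 0 and set γ = ∫₀ˣ f(t) dt. For every measurable function g : [x, ∞) → ℝ with 0 ≤ g(t) ≤ f(x) for all t ≥ x and ∫ₓ^∞ g(t) dt = 1/2 − γ, one has ∫ₓ^∞ t g(t) dt ≥ x(1/2 − γ) + (1/(2 f(x)))(γ² − γ + 1/4); equality is attained by the function u(t) = f(x) for x ≤ t ≤ x + (1/f(x))(1/2 − γ) and u(t) = 0 otherwise. -/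
/-!
Bathtub principle: among densities `0 ≤ g ≤ c` on `[x, ∞)` of prescribed mass `m`, the first
moment is minimised by packing the mass as far left as possible, i.e. by `u = c` on
`[x, x + m / c]`. With `b = x + m / c`, the function `(t - b) (g t - u t)` is pointwise
nonnegative, and its integral is `∫ t g - ∫ t u` because `g` and `u` have the same mass.
-/

open MeasureTheory Set

theorem integral_mul_le_integral_mul_of_integral_eq {α : Type*} [MeasurableSpace α]
    {μ : Measure α} {w g u : α → ℝ} (b : ℝ) (hg : Integrable g μ) (hu : Integrable u μ)
    (hwg : Integrable (fun t => w t * g t) μ) (hwu : Integrable (fun t => w t * u t) μ)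
    (h_eq : ∫ t, g t ∂μ = ∫ t, u t ∂μ)
    (h_sign : ∀ᵐ t ∂μ, 0 ≤ (w t - b) * (g t - u t)) :
    ∫ t, w t * u t ∂μ ≤ ∫ t, w t * g t ∂μ := by
  have h_expand : ∫ t, (w t - b) * (g t - u t) ∂μ
      = (∫ t, w t * g t ∂μ - ∫ t, w t * u t ∂μ) - b * (∫ t, g t ∂μ - ∫ t, u t ∂μ) := by
    have : (fun t => (w t - b) * (g t - u t))
        = fun t => (w t * g t - w t * u t) - b * (g t - u t) := by
      ext t; ring
    have hwg_wu : Integrable (fun t => w t * g t - w t * u t) μ := hwg.sub hwu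
    have hg_u : Integrable (fun t => b * (g t - u t)) μ := (hg.sub hu).const_mul b
    rw [this, integral_sub hwg_wu hg_u, integral_sub hwg hwu, integral_const_mul,
      integral_sub hg hu]
  have := integral_nonneg_of_ae h_sign
  rw [h_expand, h_eq, sub_self, mul_zero, sub_zero] at this
  linarith

theorem intervalIntegral_le_setIntegral_Ioi {f : ℝ → ℝ} {a x : ℝ} (hax : a ≤ x)
    (hf : IntegrableOn f (Ioi a)) (hf_nonneg : ∀ t, a ≤ t → 0 ≤ f t) :
    ∫ t in a..x, f t ≤ ∫ t in Ioi a, f t := by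
  rw [intervalIntegral.integral_of_le hax]
  exact setIntegral_mono_set hf
    (ae_restrict_of_forall_mem measurableSet_Ioi fun t ht => hf_nonneg t (le_of_lt ht))
    Ioc_subset_Ioi_self.eventuallyLE

section Box

variable {a b : ℝ}

theorem setIntegral_Ioi_indicator_Icc (hab : a ≤ b) (h : ℝ → ℝ) :
    ∫ t in Ioi a, (Icc a b).indicator h t = ∫ t in a..b, h t := by
  have h_inter : Ioi a ∩ Icc a b = Ioc a b := by
    ext t
    exact ⟨fun ht => ⟨ht.1, ht.2.2⟩, fun ht => ⟨ht.1, ht.1.le, ht.2⟩⟩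
  rw [setIntegral_indicator measurableSet_Icc, h_inter, intervalIntegral.integral_of_le hab]

theorem integrableOn_Ioi_indicator_Icc {h : ℝ → ℝ} (hh : Continuous h) :
    IntegrableOn ((Icc a b).indicator h) (Ioi a) :=
  (hh.integrableOn_Icc.integrable_indicator measurableSet_Icc).integrableOn

theorem mul_indicator_Icc_const (c : ℝ) :
    (fun t => t * (Icc a b).indicator (fun _ => c) t) = (Icc a b).indicator fun t => t * c :=
  funext fun _ => (indicator_mul_right _ (fun t => t) _).symm

theorem setIntegral_Ioi_indicator_Icc_const (hab : a ≤ b) (c : ℝ) :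
    ∫ t in Ioi a, (Icc a b).indicator (fun _ => c) t = (b - a) * c := by
  rw [setIntegral_Ioi_indicator_Icc hab, intervalIntegral.integral_const, smul_eq_mul]

theorem setIntegral_Ioi_mul_indicator_Icc_const (hab : a ≤ b) (c : ℝ) :
    ∫ t in Ioi a, t * (Icc a b).indicator (fun _ => c) t = (b ^ 2 - a ^ 2) / 2 * c := by
  rw [mul_indicator_Icc_const, setIntegral_Ioi_indicator_Icc hab,
    intervalIntegral.integral_mul_const, integral_id]

theorem sub_mul_sub_indicator_Icc_nonneg {g : ℝ → ℝ} {c t : ℝ} (hat : a ≤ t)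
    (hg : 0 ≤ g t ∧ g t ≤ c) :
    0 ≤ (t - b) * (g t - (Icc a b).indicator (fun _ => c) t) := by
  rcases le_or_gt t b with htb | hbt
  · rw [indicator_of_mem (show t ∈ Icc a b from ⟨hat, htb⟩)]
    exact mul_nonneg_of_nonpos_of_nonpos (by linarith) (by linarith)
  · rw [indicator_of_notMem fun h => hbt.not_ge h.2]
    exact mul_nonneg (by linarith) (by linarith)

theorem setIntegral_Ioi_mul_indicator_Icc_le {g : ℝ → ℝ} {c : ℝ} (hab : a ≤ b)
    (hg_bound : ∀ t, a ≤ t → 0 ≤ g t ∧ g t ≤ c) (hg_int : IntegrableOn g (Ioi a))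
    (hg_moment : IntegrableOn (fun t => t * g t) (Ioi a))
    (hg_mass : ∫ t in Ioi a, g t = (b - a) * c) :
    ∫ t in Ioi a, t * (Icc a b).indicator (fun _ => c) t ≤ ∫ t in Ioi a, t * g t := by
  refine integral_mul_le_integral_mul_of_integral_eq b hg_int
    (integrableOn_Ioi_indicator_Icc continuous_const) hg_moment ?_
    (hg_mass.trans (setIntegral_Ioi_indicator_Icc_const hab c).symm)
    ((ae_restrict_mem measurableSet_Ioi).mono fun t ht =>
      sub_mul_sub_indicator_Icc_nonneg (le_of_lt ht) (hg_bound t (le_of_lt ht)))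
  rw [mul_indicator_Icc_const]
  exact integrableOn_Ioi_indicator_Icc (continuous_id.mul continuous_const)

end Box

theorem le_integral_mul_of_bounded_general
    (f : ℝ → ℝ) (hf_nonneg : ∀ t, 0 ≤ t → 0 ≤ f t)
    (hf_int : IntegrableOn f (Set.Ioi 0))
    (hf_total : (∫ t in Set.Ioi (0:ℝ), f t) = 1 / 2)
    (x : ℝ) (hx : 0 ≤ x) (hfx : 0 < f x)
    (γ : ℝ) (hγ : γ = ∫ t in (0:ℝ)..x, f t) :
    (∀ g : ℝ → ℝ, Measurable g →
        (∀ t, x ≤ t → 0 ≤ g t ∧ g t ≤ f x) →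
        IntegrableOn g (Set.Ioi x) →
        (∫ t in Set.Ioi x, g t) = 1 / 2 - γ →
        IntegrableOn (fun t => t * g t) (Set.Ioi x) →
        x * (1 / 2 - γ) + (1 / (2 * f x)) * (γ ^ 2 - γ + 1 / 4)
          ≤ ∫ t in Set.Ioi x, t * g t)
      ∧ (∫ t in Set.Ioi x,
            t * (if x ≤ t ∧ t ≤ x + (1 / f x) * (1 / 2 - γ) then f x else 0))
          = x * (1 / 2 - γ) + (1 / (2 * f x)) * (γ ^ 2 - γ + 1 / 4) := by
  have hγ_le : γ ≤ 1 / 2 := by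
    rw [hγ, ← hf_total]
    exact intervalIntegral_le_setIntegral_Ioi hx hf_int hf_nonneg
  set b := x + (1 / f x) * (1 / 2 - γ) with hb
  have hxb : x ≤ b := le_add_of_nonneg_right (mul_nonneg (by positivity) (by linarith))
  have h_mass : (b - x) * f x = 1 / 2 - γ := by
    rw [hb]; field_simp; ring
  have h_moment : (b ^ 2 - x ^ 2) / 2 * f x
      = x * (1 / 2 - γ) + (1 / (2 * f x)) * (γ ^ 2 - γ + 1 / 4) := by
    rw [hb]; field_simp; ring
  have h_if : ∀ t, (if x ≤ t ∧ t ≤ b then f x else 0) = (Icc x b).indicator (fun _ => f x) t :=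
    fun t => by simp only [indicator_apply, mem_Icc]
  simp only [h_if]
  refine ⟨fun g _ hg_bound hg_int hg_mass hg_moment => ?_, ?_⟩
  · rw [← h_moment, ← setIntegral_Ioi_mul_indicator_Icc_const hxb]
    exact setIntegral_Ioi_mul_indicator_Icc_le hxb hg_bound hg_int hg_moment
      (hg_mass.trans h_mass.symm)
  · rw [setIntegral_Ioi_mul_indicator_Icc_const hxb, h_moment]

/-- Fix `x ≥ 0` with `f x > 0` and set `γ = ∫₀ˣ f`.  Every measurable
`g` with `0 ≤ g ≤ f x` on `[x, ∞)` and `∫ₓ^∞ g = 1/2 − γ` satisfies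
`∫ₓ^∞ t g(t) dt ≥ x(1/2 − γ) + (γ² − γ + 1/4)/(2 f x)`, and equality is
attained by `u(t) = f x` for `x ≤ t ≤ x + (1/2 − γ)/f x`, `u(t) = 0` otherwise. -/
theorem le_integral_mul_of_bounded
    (f : ℝ → ℝ) (hf_nonneg : ∀ t, 0 ≤ t → 0 ≤ f t)
    (hf_mono : ∀ x y : ℝ, 0 ≤ x → x ≤ y → f y ≤ f x)
    (hf_int : IntegrableOn f (Set.Ioi 0))
    (hf_total : (∫ t in Set.Ioi (0:ℝ), f t) = 1 / 2)
    (hf_mom : IntegrableOn (fun t => t * f t) (Set.Ioi 0))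
    (x : ℝ) (hx : 0 ≤ x) (hfx : 0 < f x)
    (γ : ℝ) (hγ : γ = ∫ t in (0:ℝ)..x, f t) :
    (∀ g : ℝ → ℝ, Measurable g →
        (∀ t, x ≤ t → 0 ≤ g t ∧ g t ≤ f x) →
        IntegrableOn g (Set.Ioi x) →
        (∫ t in Set.Ioi x, g t) = 1 / 2 - γ →
        IntegrableOn (fun t => t * g t) (Set.Ioi x) →
        x * (1 / 2 - γ) + (1 / (2 * f x)) * (γ ^ 2 - γ + 1 / 4)
          ≤ ∫ t in Set.Ioi x, t * g t)
      ∧ (∫ t in Set.Ioi x,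
            t * (if x ≤ t ∧ t ≤ x + (1 / f x) * (1 / 2 - γ) then f x else 0))
          = x * (1 / 2 - γ) + (1 / (2 * f x)) * (γ ^ 2 - γ + 1 / 4) :=
  le_integral_mul_of_bounded_general f hf_nonneg hf_int hf_total x hx hfx γ hγ
end

section
/- For all a > 0 and x > 0, x^a γ(a, x)² − x^a Γ(a)² + 2 γ(a, x) Γ(2a, x) > 0, where Γ(a) = ∫₀^∞ t^{a−1} e^{−t} dt is the gamma function, Γ(a, x) = ∫ₓ^∞ t^{a−1} e^{−t} dt is the upper incomplete gamma function, and γ(a, x) = ∫₀ˣ t^{a−1} e^{−t} dt is the lower incomplete gamma function. -/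
/-!
Write `γ(x) = γ(a, x)` and `f(t) = t^(a-1) e^(-t)`, so that `γ' = f` and
`t^(2a-1) e^(-t) = t^a f(t)`. Since `(γ²)' = 2 f γ`, the claim is equivalent to
`x^a ∫ₓ^∞ f γ < γ(x) ∫ₓ^∞ t^a f(t) dt`, which follows pointwise once `γ(t) / t^a` is
strictly decreasing. Its derivative has the sign of `t^a e^(-t) - a γ(t)`, which is negative
because `a γ(t) = ∫₀ᵗ a s^(a-1) e^(-s) ds` exceeds `∫₀ᵗ a s^(a-1) e^(-t) ds = t^a e^(-t)`.
-/

open MeasureTheory Real Set Filter Topology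

theorem MeasureTheory.setIntegral_pos_of_forall_mem_pos {X : Type*} [MeasurableSpace X]
    {μ : Measure X} {s : Set X} {f : X → ℝ} (hs : MeasurableSet s) (hμs : μ s ≠ 0)
    (hf : IntegrableOn f s μ) (hpos : ∀ t ∈ s, 0 < f t) : 0 < ∫ t in s, f t ∂μ := by
  rw [setIntegral_pos_iff_support_of_nonneg_ae
    (ae_restrict_of_forall_mem hs fun t ht => (hpos t ht).le) hf,
    inter_eq_right.2 fun t ht => Function.mem_support.2 (hpos t ht).ne']
  exact pos_iff_ne_zero.2 hμs

namespace IncompleteGamma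

noncomputable def integrand (a t : ℝ) : ℝ := t ^ (a - 1) * exp (-t)

noncomputable def lower (a x : ℝ) : ℝ := ∫ t in (0 : ℝ)..x, integrand a t

variable {a x t : ℝ}

lemma integrand_nonneg (ht : 0 ≤ t) : 0 ≤ integrand a t := by
  unfold integrand; positivity

lemma integrand_pos (ht : 0 < t) : 0 < integrand a t := by
  unfold integrand; positivity

lemma integrand_add (b : ℝ) (ht : 0 < t) : integrand (a + b) t = t ^ b * integrand a t := by
  rw [integrand, integrand, add_sub_right_comm, rpow_add ht]
  ring

lemma continuousAt_integrand (ht : 0 < t) : ContinuousAt (integrand a) t :=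
  (continuousAt_rpow_const t (a - 1) (Or.inl ht.ne')).mul
    (continuous_exp.comp continuous_neg).continuousAt

lemma measurable_integrand (a : ℝ) : Measurable (integrand a) := by
  unfold integrand; fun_prop

lemma integrableOn_integrand_Ioi (ha : 0 < a) : IntegrableOn (integrand a) (Ioi 0) :=
  (GammaIntegral_convergent ha).congr_fun (fun _ _ => mul_comm _ _) measurableSet_Ioi

lemma intervalIntegrable_integrand (ha : 0 < a) (hx : 0 ≤ x) :
    IntervalIntegrable (integrand a) volume 0 x :=
  (intervalIntegrable_iff_integrableOn_Ioc_of_le hx).2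
    ((integrableOn_integrand_Ioi ha).mono_set Ioc_subset_Ioi_self)

lemma hasDerivAt_lower (ha : 0 < a) (ht : 0 < t) : HasDerivAt (lower a) (integrand a t) t :=
  intervalIntegral.integral_hasDerivAt_right (intervalIntegrable_integrand ha ht.le)
    (measurable_integrand a).stronglyMeasurable.stronglyMeasurableAtFilter
    (continuousAt_integrand ht)

lemma lower_nonneg (hx : 0 ≤ x) : 0 ≤ lower a x :=
  intervalIntegral.integral_nonneg hx fun _ ht => integrand_nonneg ht.1

lemma lower_le_integral_Ioi (ha : 0 < a) (hx : 0 ≤ x) :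
    lower a x ≤ ∫ t in Ioi 0, integrand a t := by
  rw [lower, intervalIntegral.integral_of_le hx]
  exact setIntegral_mono_set (integrableOn_integrand_Ioi ha)
    (ae_restrict_of_forall_mem measurableSet_Ioi fun _ ht => integrand_nonneg (le_of_lt ht))
    Ioc_subset_Ioi_self.eventuallyLE

lemma tendsto_lower_atTop (ha : 0 < a) :
    Tendsto (lower a) atTop (𝓝 (∫ t in Ioi 0, integrand a t)) :=
  intervalIntegral_tendsto_integral_Ioi 0 (integrableOn_integrand_Ioi ha) tendsto_id

lemma rpow_mul_exp_neg_lt_mul_lower (ha : 0 < a) (hx : 0 < x) :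
    x ^ a * exp (-x) < a * lower a x := by
  have hrpow : IntervalIntegrable (fun t => a * t ^ (a - 1) * exp (-x)) volume 0 x :=
    ((intervalIntegral.intervalIntegrable_rpow' (by linarith)).const_mul a).mul_const _
  have hpow : x ^ a * exp (-x) = ∫ t in (0 : ℝ)..x, a * t ^ (a - 1) * exp (-x) := by
    rw [intervalIntegral.integral_mul_const, intervalIntegral.integral_const_mul,
      integral_rpow (Or.inl (by linarith)), sub_add_cancel, zero_rpow ha.ne', sub_zero,
      mul_div_cancel₀ _ ha.ne']
  rw [hpow, lower, ← intervalIntegral.integral_const_mul, ← sub_pos,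
    ← intervalIntegral.integral_sub ((intervalIntegrable_integrand ha hx.le).const_mul a) hrpow]
  refine intervalIntegral.intervalIntegral_pos_of_pos_on
    (((intervalIntegrable_integrand ha hx.le).const_mul a).sub hrpow) (fun t ht => ?_) hx
  have hexp : exp (-x) < exp (-t) := exp_lt_exp.2 (neg_lt_neg ht.2)
  have hfactor : a * integrand a t - a * t ^ (a - 1) * exp (-x)
      = a * t ^ (a - 1) * (exp (-t) - exp (-x)) := by
    rw [integrand]; ring
  rw [hfactor]
  exact mul_pos (mul_pos ha (rpow_pos_of_pos ht.1 _)) (sub_pos.2 hexp)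

lemma strictAntiOn_lower_div_rpow (ha : 0 < a) :
    StrictAntiOn (fun x => lower a x / x ^ a) (Ioi 0) := by
  have hderiv : ∀ t ∈ Ioi (0 : ℝ), HasDerivAt (fun x => lower a x / x ^ a)
      ((integrand a t * t ^ a - lower a t * (a * t ^ (a - 1))) / (t ^ a) ^ 2) t :=
    fun t ht => (hasDerivAt_lower ha ht).div (hasDerivAt_rpow_const (Or.inl (ne_of_gt ht)))
      (rpow_pos_of_pos ht a).ne'
  refine strictAntiOn_of_deriv_neg (convex_Ioi 0)
    (fun t ht => (hderiv t ht).continuousAt.continuousWithinAt) fun t ht => ?_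
  rw [interior_Ioi] at ht
  rw [(hderiv t ht).deriv]
  refine div_neg_of_neg_of_pos ?_ (pow_pos (rpow_pos_of_pos ht a) 2)
  have hfactor : integrand a t * t ^ a - lower a t * (a * t ^ (a - 1))
      = t ^ (a - 1) * (t ^ a * exp (-t) - a * lower a t) := by
    rw [integrand]; ring
  rw [hfactor]
  exact mul_neg_of_pos_of_neg (rpow_pos_of_pos ht _)
    (sub_neg.2 (rpow_mul_exp_neg_lt_mul_lower ha ht))

lemma integrableOn_integrand_mul_lower_Ioi (ha : 0 < a) (hx : 0 ≤ x) :
    IntegrableOn (fun t => integrand a t * lower a t) (Ioi x) := by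
  refine Integrable.mono' (((integrableOn_integrand_Ioi ha).mono_set
    (Ioi_subset_Ioi hx)).mul_const (∫ t in Ioi 0, integrand a t)) ?_ ?_
  · refine ContinuousOn.aestronglyMeasurable (fun t ht => ?_) measurableSet_Ioi
    have ht0 : 0 < t := hx.trans_lt ht
    exact ((continuousAt_integrand ht0).mul
      (hasDerivAt_lower ha ht0).continuousAt).continuousWithinAt
  · filter_upwards [ae_restrict_mem measurableSet_Ioi] with t ht
    have ht0 : 0 < t := hx.trans_lt ht
    rw [norm_of_nonneg (mul_nonneg (integrand_nonneg ht0.le) (lower_nonneg ht0.le))]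
    exact mul_le_mul_of_nonneg_left (lower_le_integral_Ioi ha ht0.le) (integrand_nonneg ht0.le)

lemma integral_integrand_mul_lower_Ioi (ha : 0 < a) (hx : 0 < x) :
    ∫ t in Ioi x, integrand a t * lower a t
      = ((∫ t in Ioi 0, integrand a t) ^ 2 - lower a x ^ 2) / 2 := by
  have hderiv : ∀ t ∈ Ioi (0 : ℝ),
      HasDerivAt (fun t => lower a t ^ 2 / 2) (integrand a t * lower a t) t := fun t ht =>
    (((hasDerivAt_lower ha ht).pow 2).div_const 2).congr_deriv (by ring)
  rw [integral_Ioi_of_hasDerivAt_of_tendsto (hderiv x hx).continuousAt.continuousWithinAt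
    (fun t ht => hderiv t (hx.trans ht)) (integrableOn_integrand_mul_lower_Ioi ha hx.le)
    (((tendsto_lower_atTop ha).pow 2).div_const 2)]
  ring

lemma rpow_mul_integral_integrand_mul_lower_lt (ha : 0 < a) (hx : 0 < x) :
    x ^ a * ∫ t in Ioi x, integrand a t * lower a t
      < lower a x * ∫ t in Ioi x, integrand (2 * a) t := by
  have hint₁ := (integrableOn_integrand_mul_lower_Ioi ha hx.le).const_mul (x ^ a)
  have hint₂ := ((integrableOn_integrand_Ioi (by positivity : 0 < 2 * a)).mono_set
    (Ioi_subset_Ioi hx.le)).const_mul (lower a x)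
  rw [← sub_pos, ← integral_const_mul, ← integral_const_mul, ← integral_sub hint₂ hint₁]
  refine setIntegral_pos_of_forall_mem_pos measurableSet_Ioi (by simp) (hint₂.sub hint₁)
    fun t ht => ?_
  have ht0 : 0 < t := hx.trans ht
  have hanti := strictAntiOn_lower_div_rpow ha hx ht0 ht
  rw [div_lt_div_iff₀ (by positivity) (by positivity)] at hanti
  have hfactor : lower a x * integrand (a + a) t - x ^ a * (integrand a t * lower a t)
      = integrand a t * (lower a x * t ^ a - lower a t * x ^ a) := by
    rw [integrand_add a ht0]; ring
  rw [two_mul, hfactor]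
  exact mul_pos (integrand_pos ht0) (sub_pos.2 hanti)

end IncompleteGamma

open IncompleteGamma

/-- For all `a > 0` and `x > 0`,
`x^a γ(a,x)² − x^a Γ(a)² + 2 γ(a,x) Γ(2a,x) > 0`, where `Γ(a)` is the gamma
function, `Γ(a,x) = ∫ₓ^∞ t^(a−1) e^(−t) dt` the upper incomplete gamma
function, and `γ(a,x) = ∫₀ˣ t^(a−1) e^(−t) dt` the lower one. -/
theorem incomplete_gamma_inequality (a x : ℝ) (ha : 0 < a) (hx : 0 < x) :
    0 < x ^ a * (∫ t in (0:ℝ)..x, t ^ (a - 1) * Real.exp (-t)) ^ 2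
        - x ^ a * (∫ t in Set.Ioi (0:ℝ), t ^ (a - 1) * Real.exp (-t)) ^ 2
        + 2 * (∫ t in (0:ℝ)..x, t ^ (a - 1) * Real.exp (-t))
            * (∫ t in Set.Ioi x, t ^ (2 * a - 1) * Real.exp (-t)) := by
  have hlt := rpow_mul_integral_integrand_mul_lower_lt ha hx
  rw [integral_integrand_mul_lower_Ioi ha hx] at hlt
  change 0 < x ^ a * lower a x ^ 2 - x ^ a * (∫ t in Ioi 0, integrand a t) ^ 2
    + 2 * lower a x * ∫ t in Ioi x, integrand (2 * a) t
  linarith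
end

section
/- For every c ∈ ℝ, E[L(Z + c)] = (k₁ + k₂) ∫_{|c|}^∞ z f(z) dz + c (k₁ − k₂)/2 + |c| (k₁ + k₂) ∫₀^{|c|} f(z) dz. -/
/-!
Write the loss as `L x = ((k₁ - k₂) x + (k₁ + k₂) |x|) / 2`. Since `f` is even, `E[Z] = 0`, so
the linear part contributes `c (k₁ - k₂) / 2`. For the absolute part, fold the integral of
`|z + c| f(z)` onto `(0, ∞)`: for `z > 0`, `|z + c| + |z - c| = 2 max(z, |c|)`, which equals
`2|c|` on `(0, |c|]` and `2z` on `(|c|, ∞)`.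
-/

open MeasureTheory Set

theorem MeasureTheory.Integrable.id_mul_of_sq_mul {μ : Measure ℝ} {f : ℝ → ℝ}
    (hf : Integrable f μ) (hf₂ : Integrable (fun z => z ^ 2 * f z) μ) :
    Integrable (fun z => z * f z) μ := by
  refine (hf.norm.add hf₂.norm).mono' (by fun_prop) (ae_of_all _ fun z => ?_)
  have hz : |z| ≤ 1 + z ^ 2 := by nlinarith [sq_nonneg (|z| - 1), sq_abs z]
  simp only [Pi.add_apply, norm_mul, norm_pow, Real.norm_eq_abs, sq_abs]
  nlinarith [mul_le_mul_of_nonneg_right hz (abs_nonneg (f z))]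

theorem integral_id_mul_eq_zero_of_even {f : ℝ → ℝ} (hf : ∀ x, f (-x) = f x) :
    ∫ z, z * f z = 0 := by
  have h := integral_neg_eq_self (fun z => z * f z) volume
  simp only [hf, neg_mul, integral_neg] at h
  linarith

theorem integral_eq_integral_Ioi_add_comp_neg {E : Type*} [NormedAddCommGroup E]
    [NormedSpace ℝ E] {g : ℝ → E} (hg : Integrable g) :
    ∫ x, g x = ∫ x in Ioi 0, (g x + g (-x)) := by
  rw [integral_add hg.integrableOn hg.comp_neg.integrableOn, add_comm, integral_comp_neg_Ioi,
    neg_zero, intervalIntegral.integral_Iic_add_Ioi hg.integrableOn hg.integrableOn]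

theorem abs_add_add_abs_neg_add (x c : ℝ) : |x + c| + |-x + c| = 2 * max |x| |c| := by
  rcases le_total |x| |c| with h | h <;> simp only [max_eq_left, max_eq_right, h] <;>
    cases abs_cases x <;> cases abs_cases c <;> cases abs_cases (x + c) <;>
    cases abs_cases (-x + c) <;> linarith

theorem integral_comp_eq_integral_smul_of_map_eq_withDensity {Ω E : Type*} [MeasurableSpace Ω]
    [NormedAddCommGroup E] [NormedSpace ℝ E] {μ : Measure Ω} {Z : Ω → ℝ} {f : ℝ → ℝ}
    (hZ : Measurable Z) (hf : Measurable f) (hf_nonneg : ∀ x, 0 ≤ f x)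
    (hdens : Measure.map Z μ = volume.withDensity (fun z => ENNReal.ofReal (f z)))
    {g : ℝ → E} (hg : AEStronglyMeasurable g (Measure.map Z μ)) :
    ∫ ω, g (Z ω) ∂μ = ∫ z, f z • g z := by
  rw [← integral_map hZ.aemeasurable hg, hdens,
    integral_withDensity_eq_integral_toReal_smul hf.ennreal_ofReal
      (ae_of_all _ fun _ => ENNReal.ofReal_lt_top)]
  simp only [ENNReal.toReal_ofReal (hf_nonneg _)]

theorem integrable_abs_add_mul {μ : Measure ℝ} {f : ℝ → ℝ} (hf : Integrable f μ)
    (hzf : Integrable (fun z => z * f z) μ) (c : ℝ) : Integrable (fun z => |z + c| * f z) μ := by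
  refine (hzf.norm.add (hf.norm.const_mul |c|)).mono' (by fun_prop) (ae_of_all _ fun z => ?_)
  simp only [Pi.add_apply, norm_mul, Real.norm_eq_abs, abs_abs]
  nlinarith [mul_le_mul_of_nonneg_right (abs_add_le z c) (abs_nonneg (f z))]

theorem integral_abs_add_mul_of_even {f : ℝ → ℝ} (hf : Integrable f)
    (hzf : Integrable (fun z => z * f z)) (hf_even : ∀ x, f (-x) = f x) (c : ℝ) :
    ∫ z, |z + c| * f z = 2 * ((∫ z in Ioi |c|, z * f z) + |c| * ∫ z in (0 : ℝ)..|c|, f z) := by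
  set h : ℝ → ℝ := fun z => |z + c| * f z
  have hh : Integrable h := integrable_abs_add_mul hf hzf c
  have hsym : IntegrableOn (fun x => h x + h (-x)) (Ioi 0) := (hh.add hh.comp_neg).integrableOn
  have hfold (x : ℝ) : h x + h (-x) = 2 * max |x| |c| * f x := by
    simp only [h, hf_even, ← abs_add_add_abs_neg_add]
    ring
  have h_near (x : ℝ) (hx : x ∈ Ioc 0 |c|) : h x + h (-x) = 2 * |c| * f x := by
    rw [hfold, abs_of_pos hx.1, max_eq_right hx.2]
  have h_far (x : ℝ) (hx : x ∈ Ioi |c|) : h x + h (-x) = 2 * (x * f x) := by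
    rw [hfold, abs_of_pos ((abs_nonneg c).trans_lt hx), max_eq_left (le_of_lt hx), mul_assoc]
  rw [integral_eq_integral_Ioi_add_comp_neg hh, ← Ioc_union_Ioi_eq_Ioi (abs_nonneg c),
    setIntegral_union Ioc_disjoint_Ioi_same measurableSet_Ioi
      (hsym.mono_set Ioc_subset_Ioi_self) (hsym.mono_set (Ioi_subset_Ioi (abs_nonneg c))),
    setIntegral_congr_fun measurableSet_Ioc h_near, setIntegral_congr_fun measurableSet_Ioi h_far,
    integral_const_mul, integral_const_mul, intervalIntegral.integral_of_le (abs_nonneg c)]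
  ring

theorem expectation_loss_shift_general
    {Ω : Type*} [MeasurableSpace Ω] (μ : Measure Ω)
    (f : ℝ → ℝ) (hf_meas : Measurable f) (hf_nonneg : ∀ x, 0 ≤ f x)
    (hf_total : ∫ z, f z = 1)
    (hf_symm : ∀ x, f (-x) = f x)
    (Z : Ω → ℝ) (hZ : Measurable Z)
    (hdens : Measure.map Z μ = volume.withDensity (fun z => ENNReal.ofReal (f z)))
    (hmom : Integrable (fun z => z ^ 2 * f z))
    (k₁ k₂ : ℝ)
    (L : ℝ → ℝ) (hL : ∀ z, L z = if 0 ≤ z then k₁ * z else -k₂ * z) :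
    ∀ c : ℝ, (∫ ω, L (Z ω + c) ∂μ)
      = (k₁ + k₂) * (∫ z in Set.Ioi |c|, z * f z) + c * (k₁ - k₂) / 2
        + |c| * (k₁ + k₂) * (∫ z in (0:ℝ)..|c|, f z) := by
  intro c
  have hf : Integrable f := Integrable.of_integral_ne_zero (by simp [hf_total])
  have hzf : Integrable (fun z => z * f z) := hf.id_mul_of_sq_mul hmom
  have hlin : Integrable (fun z => z * f z + c * f z) := hzf.add (hf.const_mul c)
  have hL_abs : L = fun z => (k₁ - k₂) / 2 * z + (k₁ + k₂) / 2 * |z| := by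
    ext z
    rw [hL]
    split_ifs with hz
    · rw [abs_of_nonneg hz]; ring
    · rw [abs_of_neg (not_le.mp hz)]; ring
  have hsplit (z : ℝ) : f z • L (z + c)
      = (k₁ - k₂) / 2 * (z * f z + c * f z) + (k₁ + k₂) / 2 * (|z + c| * f z) := by
    rw [hL_abs, smul_eq_mul]; ring
  rw [integral_comp_eq_integral_smul_of_map_eq_withDensity hZ hf_meas hf_nonneg hdens
      (g := fun z => L (z + c)) (by rw [hL_abs]; fun_prop), funext hsplit,
    integral_add (hlin.const_mul _) ((integrable_abs_add_mul hf hzf c).const_mul _),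
    integral_const_mul, integral_const_mul, integral_add hzf (hf.const_mul c), integral_const_mul,
    hf_total, integral_id_mul_eq_zero_of_even hf_symm,
    integral_abs_add_mul_of_even hf hzf hf_symm c]
  ring

/-- `E[L(Z + c)] = (k₁+k₂) ∫_{|c|}^∞ z f(z) dz + c(k₁−k₂)/2
    + |c|(k₁+k₂) ∫₀^{|c|} f(z) dz` for every `c`. -/
theorem expectation_loss_shift
    {Ω : Type*} [MeasurableSpace Ω] (μ : Measure Ω) [IsProbabilityMeasure μ]
    (f : ℝ → ℝ) (hf_meas : Measurable f) (hf_nonneg : ∀ x, 0 ≤ f x)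
    (hf_total : ∫ z, f z = 1)
    (hf_symm : ∀ x, f (-x) = f x)
    (hf_mono : ∀ x y : ℝ, 0 ≤ x → x ≤ y → f y ≤ f x)
    (Z : Ω → ℝ) (hZ : Measurable Z)
    (hdens : Measure.map Z μ = volume.withDensity (fun z => ENNReal.ofReal (f z)))
    (hmom : Integrable (fun z => z ^ 2 * f z))
    (k₁ k₂ : ℝ) (hk₁ : 0 < k₁) (hk₂ : 0 < k₂)
    (L : ℝ → ℝ) (hL : ∀ z, L z = if 0 ≤ z then k₁ * z else -k₂ * z) :
    ∀ c : ℝ, (∫ ω, L (Z ω + c) ∂μ)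
      = (k₁ + k₂) * (∫ z in Set.Ioi |c|, z * f z) + c * (k₁ - k₂) / 2
        + |c| * (k₁ + k₂) * (∫ z in (0:ℝ)..|c|, f z) :=
  expectation_loss_shift_general μ f hf_meas hf_nonneg hf_total hf_symm Z hZ hdens hmom k₁ k₂ L hL
end

section
/- For every c ∈ ℝ, E[L(Z + c)²] = (k₁² + k₂²) ∫₀^∞ z² f(z) dz + sgn(c)(k₁² − k₂²) ∫₀^{|c|} z² f(z) dz + 2c (k₁² − k₂²) ∫_{|c|}^∞ z f(z) dz + c² (k₁² + k₂²)/2 + c|c| (k₁² − k₂²) ∫₀^{|c|} f(z) dz, where sgn(c) = 1 for c ≥ 0 and sgn(c) = −1 for c < 0. -/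
open MeasureTheory ProbabilityTheory

/-- `E[L(Z + c)²] = (k₁²+k₂²) ∫₀^∞ z² f + sgn(c)(k₁²−k₂²) ∫₀^{|c|} z² f
    + 2c(k₁²−k₂²) ∫_{|c|}^∞ z f + c²(k₁²+k₂²)/2 + c|c|(k₁²−k₂²) ∫₀^{|c|} f`
for every `c`, where `sgn(c) = 1` for `c ≥ 0` and `−1` for `c < 0`. -/
theorem expectation_sq_loss_shift
    {Ω : Type*} [MeasurableSpace Ω] (μ : Measure Ω) [IsProbabilityMeasure μ]
    (f : ℝ → ℝ) (hf_meas : Measurable f) (hf_nonneg : ∀ x, 0 ≤ f x)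
    (hf_total : ∫ z, f z = 1)
    (hf_symm : ∀ x, f (-x) = f x)
    (hf_mono : ∀ x y : ℝ, 0 ≤ x → x ≤ y → f y ≤ f x)
    (Z : Ω → ℝ) (hZ : Measurable Z)
    (hdens : Measure.map Z μ = volume.withDensity (fun z => ENNReal.ofReal (f z)))
    (hmom : Integrable (fun z => z ^ 2 * f z))
    (k₁ k₂ : ℝ) (hk₁ : 0 < k₁) (hk₂ : 0 < k₂)
    (L : ℝ → ℝ) (hL : ∀ z, L z = if 0 ≤ z then k₁ * z else -k₂ * z) :
    ∀ c : ℝ, (∫ ω, (L (Z ω + c)) ^ 2 ∂μ)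
      = (k₁ ^ 2 + k₂ ^ 2) * (∫ z in Set.Ioi (0:ℝ), z ^ 2 * f z)
        + (if 0 ≤ c then (1:ℝ) else -1) * (k₁ ^ 2 - k₂ ^ 2) * (∫ z in (0:ℝ)..|c|, z ^ 2 * f z)
        + 2 * c * (k₁ ^ 2 - k₂ ^ 2) * (∫ z in Set.Ioi |c|, z * f z)
        + c ^ 2 * (k₁ ^ 2 + k₂ ^ 2) / 2
        + c * |c| * (k₁ ^ 2 - k₂ ^ 2) * (∫ z in (0:ℝ)..|c|, f z) := by
  intro c
  -- basic integrability facts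
  have hf_int : Integrable f := by
    by_contra h
    rw [integral_undef h] at hf_total
    norm_num at hf_total
  have hzf_meas : Measurable fun z : ℝ => z * f z := measurable_id.mul hf_meas
  have hzf_int : Integrable fun z : ℝ => z * f z := by
    refine (hmom.add hf_int).mono' hzf_meas.aestronglyMeasurable (ae_of_all _ fun z => ?_)
    have h1 : |z| ≤ z ^ 2 + 1 := by nlinarith [sq_nonneg (|z| - 1), sq_abs z, abs_nonneg z]
    have h2 : ‖z * f z‖ = |z| * f z := by
      rw [Real.norm_eq_abs, abs_mul, abs_of_nonneg (hf_nonneg z)]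
    rw [h2]
    simp only [Pi.add_apply]
    nlinarith [hf_nonneg z]
  have hq_int : Integrable fun z : ℝ => (z + c) ^ 2 * f z := by
    have he : (fun z : ℝ => (z + c) ^ 2 * f z)
        = fun z => z ^ 2 * f z + (2 * c) * (z * f z) + c ^ 2 * f z := by
      funext z; ring
    rw [he]
    exact (hmom.add (hzf_int.const_mul _)).add (hf_int.const_mul _)
  -- splitting an integral at 0 vs a
  have split : ∀ h : ℝ → ℝ, Integrable h → ∀ a : ℝ,
      (∫ z in Set.Ioi a, h z) = (∫ z in Set.Ioi (0:ℝ), h z) - ∫ z in (0:ℝ)..a, h z := by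
    intro h hint a
    have h1 : (∫ z in Set.Iic a, h z) - ∫ z in Set.Iic (0:ℝ), h z = ∫ z in (0:ℝ)..a, h z :=
      intervalIntegral.integral_Iic_sub_Iic hint.integrableOn hint.integrableOn
    have h2 := intervalIntegral.integral_Iic_add_Ioi (b := a) (f := h) (μ := volume)
      hint.integrableOn hint.integrableOn
    have h3 := intervalIntegral.integral_Iic_add_Ioi (b := (0:ℝ)) (f := h) (μ := volume)
      hint.integrableOn hint.integrableOn
    linarith
  -- symmetry for even integrands
  have symmE : ∀ h : ℝ → ℝ, (∀ x, h (-x) = h x) → ∀ a : ℝ,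
      (∫ z in Set.Iic a, h z) = ∫ z in Set.Ioi (-a), h z := by
    intro h hsym a
    have := integral_comp_neg_Iic a h
    simp_rw [hsym] at this
    exact this
  -- symmetry for odd integrands
  have symmO : ∀ a : ℝ, (∫ z in Set.Iic a, z * f z) = -∫ z in Set.Ioi (-a), z * f z := by
    intro a
    have := integral_comp_neg_Iic a (fun z => z * f z)
    simp only [hf_symm, neg_mul] at this
    rw [integral_neg] at this
    linarith
  have hz2f_even : ∀ x : ℝ, (-x) ^ 2 * f (-x) = x ^ 2 * f x := by
    intro x; rw [hf_symm]; ring_nf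
  -- total integrals
  have total2 : (∫ z, z ^ 2 * f z) = 2 * ∫ z in Set.Ioi (0:ℝ), z ^ 2 * f z := by
    have h2 := intervalIntegral.integral_Iic_add_Ioi (b := (0:ℝ))
      (f := fun z => z ^ 2 * f z) (μ := volume) hmom.integrableOn hmom.integrableOn
    have h3 := symmE (fun z => z ^ 2 * f z) hz2f_even 0
    rw [neg_zero] at h3
    linarith
  have total1 : (∫ z, z * f z) = 0 := by
    have h2 := intervalIntegral.integral_Iic_add_Ioi (b := (0:ℝ))
      (f := fun z => z * f z) (μ := volume) hzf_int.integrableOn hzf_int.integrableOn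
    have h3 := symmO 0
    rw [neg_zero] at h3
    linarith
  have half : (∫ z in Set.Ioi (0:ℝ), f z) = 1 / 2 := by
    have h2 := intervalIntegral.integral_Iic_add_Ioi (b := (0:ℝ))
      (f := f) (μ := volume) hf_int.integrableOn hf_int.integrableOn
    have h3 := symmE f hf_symm 0
    rw [neg_zero] at h3
    linarith
  -- interval integral of even functions: ∫ 0..c = s * ∫ 0..|c|
  set s : ℝ := if 0 ≤ c then (1:ℝ) else -1 with hs
  have evenI : ∀ h : ℝ → ℝ, (∀ x, h (-x) = h x) →
      (∫ z in (0:ℝ)..c, h z) = s * ∫ z in (0:ℝ)..|c|, h z := by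
    intro h hsym
    by_cases hc : 0 ≤ c
    · rw [abs_of_nonneg hc, hs, if_pos hc, one_mul]
    · have := intervalIntegral.integral_comp_neg (a := c) (b := (0:ℝ)) (f := h)
      simp_rw [hsym] at this
      rw [neg_zero] at this
      rw [abs_of_neg (lt_of_not_ge hc), hs, if_neg hc, neg_one_mul, ← this,
        intervalIntegral.integral_symm]
  -- the three key Iic-integrals
  have hIocIoi : (∫ z in Set.Ioi c, z * f z) = ∫ z in Set.Ioi |c|, z * f z := by
    by_cases hc : 0 ≤ c
    · rw [abs_of_nonneg hc]
    · rw [abs_of_neg (lt_of_not_ge hc)]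
      have h1 := split (fun z => z * f z) hzf_int c
      have h2 := split (fun z => z * f z) hzf_int (-c)
      have h3 : (∫ z in (0:ℝ)..c, z * f z) = ∫ z in (0:ℝ)..(-c), z * f z := by
        have hn := intervalIntegral.integral_comp_neg (a := c) (b := (0:ℝ))
          (f := fun z => z * f z)
        simp only [hf_symm, neg_mul] at hn
        rw [intervalIntegral.integral_neg, neg_zero] at hn
        rw [intervalIntegral.integral_symm c 0]
        exact hn
      linarith
  have J2 : (∫ z in Set.Iic (-c), z ^ 2 * f z)
      = (∫ z in Set.Ioi (0:ℝ), z ^ 2 * f z) - s * ∫ z in (0:ℝ)..|c|, z ^ 2 * f z := by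
    rw [symmE (fun z => z ^ 2 * f z) hz2f_even (-c), neg_neg,
      split (fun z => z ^ 2 * f z) hmom c, evenI (fun z => z ^ 2 * f z) hz2f_even]
  have J1 : (∫ z in Set.Iic (-c), z * f z) = -∫ z in Set.Ioi |c|, z * f z := by
    rw [symmO (-c), neg_neg, hIocIoi]
  have J0 : (∫ z in Set.Iic (-c), f z) = 1 / 2 - s * ∫ z in (0:ℝ)..|c|, f z := by
    rw [symmE f hf_symm (-c), neg_neg, split f hf_int c, evenI f hf_symm, half]
  -- complements
  have I2 : (∫ z in Set.Ioi (-c), z ^ 2 * f z)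
      = (∫ z in Set.Ioi (0:ℝ), z ^ 2 * f z) + s * ∫ z in (0:ℝ)..|c|, z ^ 2 * f z := by
    have h2 := intervalIntegral.integral_Iic_add_Ioi (b := -c)
      (f := fun z => z ^ 2 * f z) (μ := volume) hmom.integrableOn hmom.integrableOn
    rw [total2] at h2; linarith
  have I1 : (∫ z in Set.Ioi (-c), z * f z) = ∫ z in Set.Ioi |c|, z * f z := by
    have h2 := intervalIntegral.integral_Iic_add_Ioi (b := -c)
      (f := fun z => z * f z) (μ := volume) hzf_int.integrableOn hzf_int.integrableOn
    rw [total1] at h2; linarith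
  have I0 : (∫ z in Set.Ioi (-c), f z) = 1 / 2 + s * ∫ z in (0:ℝ)..|c|, f z := by
    have h2 := intervalIntegral.integral_Iic_add_Ioi (b := -c)
      (f := f) (μ := volume) hf_int.integrableOn hf_int.integrableOn
    rw [hf_total] at h2; linarith
  -- step 1: transfer expectation to an integral against the density
  have hg_meas : Measurable fun z : ℝ =>
      (if 0 ≤ z + c then k₁ * (z + c) else -k₂ * (z + c)) ^ 2 := by
    apply Measurable.pow_const
    exact Measurable.ite (measurableSet_le measurable_const (measurable_id.add_const c))
      (measurable_const.mul (measurable_id.add_const c))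
      (measurable_const.mul (measurable_id.add_const c))
  have hstep1 : (∫ ω, (L (Z ω + c)) ^ 2 ∂μ)
      = ∫ z, (if 0 ≤ z + c then k₁ * (z + c) else -k₂ * (z + c)) ^ 2 * f z := by
    calc (∫ ω, (L (Z ω + c)) ^ 2 ∂μ)
        = ∫ ω, (if 0 ≤ Z ω + c then k₁ * (Z ω + c) else -k₂ * (Z ω + c)) ^ 2 ∂μ := by
          simp_rw [hL]
      _ = ∫ z, (if 0 ≤ z + c then k₁ * (z + c) else -k₂ * (z + c)) ^ 2 ∂(Measure.map Z μ) :=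
          (integral_map hZ.aemeasurable hg_meas.aestronglyMeasurable).symm
      _ = ∫ z, (if 0 ≤ z + c then k₁ * (z + c) else -k₂ * (z + c)) ^ 2
            ∂(volume.withDensity fun z => ENNReal.ofReal (f z)) := by rw [hdens]
      _ = ∫ z, (if 0 ≤ z + c then k₁ * (z + c) else -k₂ * (z + c)) ^ 2 * f z := by
          have hr : (fun z : ℝ => ENNReal.ofReal (f z))
              = fun z => ((Real.toNNReal (f z) : NNReal) : ENNReal) := rfl
          rw [hr, integral_withDensity_eq_integral_smul hf_meas.real_toNNReal]
          congr 1
          funext z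
          rw [NNReal.smul_def, smul_eq_mul, Real.coe_toNNReal _ (hf_nonneg z)]
          ring
  -- split at -c
  have hEqIoi : Set.EqOn
      (fun z : ℝ => (if 0 ≤ z + c then k₁ * (z + c) else -k₂ * (z + c)) ^ 2 * f z)
      (fun z : ℝ => k₁ ^ 2 * ((z + c) ^ 2 * f z)) (Set.Ioi (-c)) := by
    intro z hz
    have h0 : 0 ≤ z + c := by simp only [Set.mem_Ioi] at hz; linarith
    simp only [if_pos h0]; ring
  have hEqIic : Set.EqOn
      (fun z : ℝ => (if 0 ≤ z + c then k₁ * (z + c) else -k₂ * (z + c)) ^ 2 * f z)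
      (fun z : ℝ => k₂ ^ 2 * ((z + c) ^ 2 * f z)) (Set.Iic (-c)) := by
    intro z hz
    have h0 : z + c ≤ 0 := by simp only [Set.mem_Iic] at hz; linarith
    by_cases h1 : 0 ≤ z + c
    · have : z + c = 0 := le_antisymm h0 h1
      simp [this]
    · simp only [if_neg h1]; ring
  have hIntIic : IntegrableOn
      (fun z : ℝ => (if 0 ≤ z + c then k₁ * (z + c) else -k₂ * (z + c)) ^ 2 * f z)
      (Set.Iic (-c)) := by
    exact IntegrableOn.congr_fun ((hq_int.const_mul (k₂ ^ 2)).integrableOn)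
      (fun z hz => (hEqIic hz).symm) measurableSet_Iic
  have hIntIoi : IntegrableOn
      (fun z : ℝ => (if 0 ≤ z + c then k₁ * (z + c) else -k₂ * (z + c)) ^ 2 * f z)
      (Set.Ioi (-c)) := by
    exact IntegrableOn.congr_fun ((hq_int.const_mul (k₁ ^ 2)).integrableOn)
      (fun z hz => (hEqIoi hz).symm) measurableSet_Ioi
  have hsplit_main : (∫ z, (if 0 ≤ z + c then k₁ * (z + c) else -k₂ * (z + c)) ^ 2 * f z)
      = k₂ ^ 2 * (∫ z in Set.Iic (-c), (z + c) ^ 2 * f z)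
        + k₁ ^ 2 * (∫ z in Set.Ioi (-c), (z + c) ^ 2 * f z) := by
    rw [← intervalIntegral.integral_Iic_add_Ioi hIntIic hIntIoi]
    congr 1
    · rw [setIntegral_congr_fun measurableSet_Iic hEqIic, integral_const_mul]
    · rw [setIntegral_congr_fun measurableSet_Ioi hEqIoi, integral_const_mul]
  -- expansion of (z+c)^2 on a measurable set
  have expand : ∀ st : Set ℝ, MeasurableSet st →
      (∫ z in st, (z + c) ^ 2 * f z)
      = (∫ z in st, z ^ 2 * f z) + 2 * c * (∫ z in st, z * f z)
        + c ^ 2 * (∫ z in st, f z) := by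
    intro st hst
    have h1 : (∫ z in st, (z + c) ^ 2 * f z)
        = ∫ z in st, (z ^ 2 * f z + 2 * c * (z * f z) + c ^ 2 * f z) := by
      apply setIntegral_congr_fun hst
      intro z _; ring
    have hA : IntegrableOn (fun z : ℝ => z ^ 2 * f z + 2 * c * (z * f z)) st :=
      hmom.integrableOn.add ((hzf_int.const_mul (2 * c)).integrableOn)
    have hB : IntegrableOn (fun z : ℝ => c ^ 2 * f z) st :=
      (hf_int.const_mul (c ^ 2)).integrableOn
    have hC : IntegrableOn (fun z : ℝ => 2 * c * (z * f z)) st :=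
      (hzf_int.const_mul (2 * c)).integrableOn
    rw [h1, integral_add hA hB, integral_add hmom.integrableOn hC,
      integral_const_mul, integral_const_mul]
  -- put everything together
  rw [hstep1, hsplit_main, expand _ measurableSet_Iic, expand _ measurableSet_Ioi,
    J2, J1, J0, I2, I1, I0]
  have hcabs : c * |c| = s * c ^ 2 := by
    by_cases hc : 0 ≤ c
    · rw [abs_of_nonneg hc, hs, if_pos hc]; ring
    · rw [abs_of_neg (lt_of_not_ge hc), hs, if_neg hc]; ring
  rw [hcabs]
  show _ = _ + s * _ * _ + _ + _ + s * c ^ 2 * _ * _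
  ring
end

section
/- The function c ↦ E[L(Z + c)] is differentiable on ℝ with derivative (d/dc) E[L(Z + c)] = (k₁ − k₂)/2 + sgn(c)(k₁ + k₂) ∫₀^{|c|} f(z) dz, where sgn(c) = 1 for c ≥ 0 and sgn(c) = −1 for c < 0. -/
/-!
Since `Z` has a density, `Z + c ≠ 0` almost surely, so the Lipschitz loss is a.s. differentiable
at `Z + c` and one may differentiate under the expectation: the derivative is
`k₁ P(Z > -c) - k₂ P(Z ≤ -c) = -k₂ + (k₁ + k₂) P(Z > -c)`. By symmetry of `f`,
`P(Z > -c) = P(Z < c) = 1/2 + ∫₀^c f`, and `∫₀^c f = sgn(c) ∫₀^|c| f`.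
-/

open MeasureTheory Set Filter

noncomputable def linLinLoss (k₁ k₂ z : ℝ) : ℝ := if 0 ≤ z then k₁ * z else -k₂ * z

theorem linLinLoss_eq_max (k₁ k₂ z : ℝ) :
    linLinLoss k₁ k₂ z = k₁ * max z 0 + k₂ * max (-z) 0 := by
  unfold linLinLoss
  split_ifs with h
  · rw [max_eq_left h, max_eq_right (neg_nonpos.2 h)]; ring
  · rw [max_eq_right (not_le.1 h).le, max_eq_left (neg_nonneg.2 (not_le.1 h).le)]; ring

theorem lipschitzWith_linLinLoss (k₁ k₂ : ℝ) :
    LipschitzWith (‖k₁‖₊ + ‖k₂‖₊) (linLinLoss k₁ k₂) := by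
  have h₁ := (lipschitzWith_smul k₁).comp (LipschitzWith.id.max_const 0)
  have h₂ := (lipschitzWith_smul k₂).comp (LipschitzWith.id.neg.max_const 0)
  simpa [funext (linLinLoss_eq_max k₁ k₂)] using h₁.add h₂

theorem hasDerivAt_linLinLoss (k₁ k₂ : ℝ) {z : ℝ} (hz : z ≠ 0) :
    HasDerivAt (linLinLoss k₁ k₂) (if 0 < z then k₁ else -k₂) z := by
  rcases hz.lt_or_gt with hneg | hpos
  · rw [if_neg hneg.not_gt]
    refine ((hasDerivAt_id z).const_mul (-k₂)).congr_of_eventuallyEq ?_ |>.congr_deriv (mul_one _)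
    filter_upwards [Iio_mem_nhds hneg] with x hx
    simp [linLinLoss, not_le.2 (show x < 0 from hx)]
  · rw [if_pos hpos]
    refine ((hasDerivAt_id z).const_mul k₁).congr_of_eventuallyEq ?_ |>.congr_deriv (mul_one _)
    filter_upwards [Ioi_mem_nhds hpos] with x hx
    simp [linLinLoss, (show 0 < x from hx).le]

section ShiftDerivative

variable {Ω : Type*} [MeasurableSpace Ω] {μ : Measure Ω} [IsFiniteMeasure μ] {X : Ω → ℝ}
  {g g' : ℝ → ℝ} {K : NNReal}

theorem LipschitzWith.integrable_comp_add_const (hg : LipschitzWith K g) (hX : Integrable X μ)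
    (c : ℝ) : Integrable (fun ω => g (X ω + c)) μ := by
  have hXc := hX.add (integrable_const c)
  refine ((integrable_const ‖g 0‖).add (hXc.norm.const_mul K)).mono'
    (hg.continuous.comp_aestronglyMeasurable hXc.1) (ae_of_all _ fun ω => ?_)
  have hlip := hg.dist_le_mul (X ω + c) 0
  rw [dist_zero_right, dist_eq_norm] at hlip
  simp only [Pi.add_apply]
  linarith [norm_le_norm_add_norm_sub' (g (X ω + c)) (g 0)]

theorem hasDerivAt_integral_comp_add (hg : LipschitzWith K g) (hg' : Measurable g')
    (hX : Integrable X μ) {c : ℝ} (hderiv : ∀ᵐ ω ∂μ, HasDerivAt g (g' (X ω + c)) (X ω + c)) :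
    HasDerivAt (fun c => ∫ ω, g (X ω + c) ∂μ) (∫ ω, g' (X ω + c) ∂μ) c := by
  have hshift (ω : Ω) : LipschitzWith K fun x => g (X ω + x) :=
    .of_dist_le_mul fun a b => by simpa using hg.dist_le_mul (X ω + a) (X ω + b)
  refine (hasDerivAt_integral_of_dominated_loc_of_lip (bound := fun _ => K) univ_mem
    (.of_forall fun x => (hg.integrable_comp_add_const hX x).1)
    (hg.integrable_comp_add_const hX c)
    (hg'.comp_aemeasurable (hX.add (integrable_const c)).1.aemeasurable).aestronglyMeasurable
    (ae_of_all _ fun ω => by simpa using hshift ω)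
    (integrable_const _)
    (hderiv.mono fun ω h => by simpa using h.comp_const_add (X ω) c)).2

end ShiftDerivative

section Density

variable {α : Type*} [MeasurableSpace α] {μ : Measure α} {f : α → ℝ}

theorem integrable_withDensity_ofReal_iff (hf : Measurable f) (hf_nonneg : 0 ≤ᵐ[μ] f)
    {g : α → ℝ} :
    Integrable g (μ.withDensity fun x => ENNReal.ofReal (f x)) ↔
      Integrable (fun x => g x * f x) μ := by
  rw [integrable_withDensity_iff hf.ennreal_ofReal (ae_of_all _ fun _ => ENNReal.ofReal_lt_top)]
  refine integrable_congr (hf_nonneg.mono fun x hx => ?_)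
  simp only [ENNReal.toReal_ofReal hx]

theorem integral_withDensity_ofReal (hf : Measurable f) (hf_nonneg : 0 ≤ᵐ[μ] f) (g : α → ℝ) :
    ∫ x, g x ∂μ.withDensity (fun x => ENNReal.ofReal (f x)) = ∫ x, g x * f x ∂μ := by
  rw [integral_withDensity_eq_integral_toReal_smul hf.ennreal_ofReal
    (ae_of_all _ fun _ => ENNReal.ofReal_lt_top)]
  refine integral_congr_ae (hf_nonneg.mono fun x hx => ?_)
  simp only [ENNReal.toReal_ofReal hx, smul_eq_mul, mul_comm]

theorem integral_ite_mem_mul {s : Set α} [DecidablePred (· ∈ s)] (hs : MeasurableSet s)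
    (hf : Integrable f μ) (a b : ℝ) :
    ∫ x, (if x ∈ s then a else b) * f x ∂μ = b * ∫ x, f x ∂μ + (a - b) * ∫ x in s, f x ∂μ := by
  have hsplit : (fun x => (if x ∈ s then a else b) * f x)
      = fun x => b * f x + (a - b) * s.indicator f x := by
    ext x; by_cases hx : x ∈ s <;> simp [hx]; ring
  rw [hsplit, integral_add (hf.const_mul b) ((hf.indicator hs).const_mul _), integral_const_mul,
    integral_const_mul, integral_indicator hs]

end Density

section Even

variable {f : ℝ → ℝ}

theorem setIntegral_Ioi_neg_of_even (hf : Function.Even f) (c : ℝ) :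
    ∫ z in Ioi (-c), f z = ∫ z in Iic c, f z := by
  simpa [hf _] using integral_comp_neg_Ioi (-c) f

theorem setIntegral_Ioi_neg_eq_half_add_of_even (hf : Function.Even f) (hf_int : Integrable f)
    (c : ℝ) : ∫ z in Ioi (-c), f z = (∫ z, f z) / 2 + ∫ z in 0..c, f z := by
  have hhalf : ∫ z in Iic 0, f z = (∫ z, f z) / 2 := by
    have := integral_add_compl (measurableSet_Iic (a := (0 : ℝ))) hf_int
    rw [compl_Iic, ← neg_zero, setIntegral_Ioi_neg_of_even hf, neg_zero] at this
    linarith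
  rw [setIntegral_Ioi_neg_of_even hf, ← hhalf,
    ← intervalIntegral.integral_Iic_sub_Iic hf_int.integrableOn hf_int.integrableOn]
  ring

theorem sign_mul_intervalIntegral_abs_of_even (hf : Function.Even f) (c : ℝ) :
    (if 0 ≤ c then 1 else -1) * ∫ z in 0..|c|, f z = ∫ z in 0..c, f z := by
  rcases le_or_gt 0 c with hc | hc
  · rw [if_pos hc, abs_of_nonneg hc, one_mul]
  · rw [if_neg hc.not_ge, abs_of_neg hc, neg_one_mul, ← intervalIntegral.integral_symm]
    simpa [hf _] using (intervalIntegral.integral_comp_neg (a := 0) (b := c) f).symm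

end Even

theorem hasDerivAt_expectation_loss_shift_general
    {Ω : Type*} [MeasurableSpace Ω] (μ : Measure Ω) [IsProbabilityMeasure μ]
    (f : ℝ → ℝ) (hf_cont : Continuous f) (hf_nonneg : ∀ x, 0 ≤ f x)
    (hf_total : ∫ z, f z = 1)
    (hf_symm : ∀ x, f (-x) = f x)
    (Z : Ω → ℝ) (hZ : Measurable Z)
    (hdens : Measure.map Z μ = volume.withDensity (fun z => ENNReal.ofReal (f z)))
    (hmom : Integrable (fun z => z ^ 2 * f z))
    (k₁ k₂ : ℝ)
    (L : ℝ → ℝ) (hL : ∀ z, L z = if 0 ≤ z then k₁ * z else -k₂ * z) :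
    ∀ c : ℝ, HasDerivAt (fun c : ℝ => ∫ ω, L (Z ω + c) ∂μ)
      ((k₁ - k₂) / 2
        + (if 0 ≤ c then (1:ℝ) else -1) * (k₁ + k₂) * (∫ z in (0:ℝ)..|c|, f z)) c := by
  intro c
  obtain rfl : L = linLinLoss k₁ k₂ := funext hL
  have hf_meas : Measurable f := hf_cont.measurable
  have hf_ae_nonneg : 0 ≤ᵐ[volume] f := ae_of_all _ hf_nonneg
  have hf_int : Integrable f := .of_integral_ne_zero (by simp [hf_total])
  have hZ_int : Integrable Z μ := by
    have hsq : Integrable (fun z => z ^ 2) (μ.map Z) := by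
      rwa [hdens, integrable_withDensity_ofReal_iff hf_meas hf_ae_nonneg]
    exact (integrable_map_measure aestronglyMeasurable_id hZ.aemeasurable).1
      (((memLp_two_iff_integrable_sq aestronglyMeasurable_id).2 hsq).integrable one_le_two)
  have hZ_ne : ∀ᵐ ω ∂μ, Z ω + c ≠ 0 := by
    have hac : μ.map Z ≪ volume := hdens ▸ withDensity_absolutelyContinuous _ _
    filter_upwards [ae_of_ae_map hZ.aemeasurable (hac.ae_le (volume.ae_ne (-c)))] with ω hω
    rwa [Ne, ← eq_neg_iff_add_eq_zero]
  have hD_meas : Measurable fun z : ℝ => if 0 < z then k₁ else -k₂ :=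
    measurable_const.ite measurableSet_Ioi measurable_const
  have hderiv := hasDerivAt_integral_comp_add (lipschitzWith_linLinLoss k₁ k₂) hD_meas hZ_int
    (hZ_ne.mono fun _ => hasDerivAt_linLinLoss k₁ k₂)
  refine hderiv.congr_deriv ?_
  rw [← integral_map (f := fun z => if 0 < z + c then k₁ else -k₂) hZ.aemeasurable
      (hD_meas.comp (measurable_add_const c)).aestronglyMeasurable,
    hdens, integral_withDensity_ofReal hf_meas hf_ae_nonneg]
  simp_rw [← neg_lt_iff_pos_add, ← mem_Ioi]
  rw [integral_ite_mem_mul measurableSet_Ioi hf_int, hf_total,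
    setIntegral_Ioi_neg_eq_half_add_of_even hf_symm hf_int, hf_total, mul_right_comm,
    sign_mul_intervalIntegral_abs_of_even hf_symm]
  ring

/-- The function `c ↦ E[L(Z + c)]` is differentiable with derivative
`(k₁ − k₂)/2 + sgn(c)(k₁ + k₂) ∫₀^{|c|} f(z) dz` at each `c`, where
`sgn(c) = 1` for `c ≥ 0` and `−1` for `c < 0`. -/
theorem hasDerivAt_expectation_loss_shift
    {Ω : Type*} [MeasurableSpace Ω] (μ : Measure Ω) [IsProbabilityMeasure μ]
    (f : ℝ → ℝ) (hf_cont : Continuous f) (hf_nonneg : ∀ x, 0 ≤ f x)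
    (hf_total : ∫ z, f z = 1)
    (hf_symm : ∀ x, f (-x) = f x)
    (hf_mono : ∀ x y : ℝ, 0 ≤ x → x ≤ y → f y ≤ f x)
    (Z : Ω → ℝ) (hZ : Measurable Z)
    (hdens : Measure.map Z μ = volume.withDensity (fun z => ENNReal.ofReal (f z)))
    (hmom : Integrable (fun z => z ^ 2 * f z))
    (k₁ k₂ : ℝ) (hk₁ : 0 < k₁) (hk₂ : 0 < k₂)
    (L : ℝ → ℝ) (hL : ∀ z, L z = if 0 ≤ z then k₁ * z else -k₂ * z) :
    ∀ c : ℝ, HasDerivAt (fun c : ℝ => ∫ ω, L (Z ω + c) ∂μ)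
      ((k₁ - k₂) / 2
        + (if 0 ≤ c then (1:ℝ) else -1) * (k₁ + k₂) * (∫ z in (0:ℝ)..|c|, f z)) c :=
  hasDerivAt_expectation_loss_shift_general μ f hf_cont hf_nonneg hf_total hf_symm Z hZ hdens hmom
    k₁ k₂ L hL
end

section
/- The function c ↦ E[L(Z + c)] is convex on ℝ, and any real number C satisfying (k₁ − k₂)/2 + sgn(C)(k₁ + k₂) ∫₀^{|C|} f(z) dz = 0 (where sgn(c) = 1 for c ≥ 0 and sgn(c) = −1 for c < 0) is a global minimizer of c ↦ E[L(Z + c)]. -/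
open MeasureTheory ProbabilityTheory

/-- The function `c ↦ E[L(Z + c)]` is convex, and any `C` with
`(k₁ − k₂)/2 + sgn(C)(k₁ + k₂) ∫₀^{|C|} f = 0` is a global minimizer. -/
theorem convex_and_minimizer_expectation_loss_shift
    {Ω : Type*} [MeasurableSpace Ω] (μ : Measure Ω) [IsProbabilityMeasure μ]
    (f : ℝ → ℝ) (hf_meas : Measurable f) (hf_nonneg : ∀ x, 0 ≤ f x)
    (hf_total : ∫ z, f z = 1)
    (hf_symm : ∀ x, f (-x) = f x)
    (hf_mono : ∀ x y : ℝ, 0 ≤ x → x ≤ y → f y ≤ f x)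
    (Z : Ω → ℝ) (hZ : Measurable Z)
    (hdens : Measure.map Z μ = volume.withDensity (fun z => ENNReal.ofReal (f z)))
    (hmom : Integrable (fun z => z ^ 2 * f z))
    (k₁ k₂ : ℝ) (hk₁ : 0 < k₁) (hk₂ : 0 < k₂)
    (L : ℝ → ℝ) (hL : ∀ z, L z = if 0 ≤ z then k₁ * z else -k₂ * z) :
    ConvexOn ℝ Set.univ (fun c : ℝ => ∫ ω, L (Z ω + c) ∂μ)
      ∧ ∀ C : ℝ,
          (k₁ - k₂) / 2
              + (if 0 ≤ C then (1:ℝ) else -1) * (k₁ + k₂) * (∫ z in (0:ℝ)..|C|, f z) = 0 →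
          ∀ c : ℝ, (∫ ω, L (Z ω + C) ∂μ) ≤ ∫ ω, L (Z ω + c) ∂μ := by
  classical
  -- f is integrable
  have hf_int : Integrable f := by
    by_contra h
    rw [integral_undef h] at hf_total
    norm_num at hf_total
  -- |z| * f z is integrable
  have habs_int : Integrable (fun z => |z| * f z) := by
    refine (hf_int.add hmom).mono
      ((measurable_abs.mul hf_meas).aestronglyMeasurable) ?_
    filter_upwards with z
    have h1 : |z| ≤ 1 + z ^ 2 := by nlinarith [sq_abs z, sq_nonneg (|z| - 1), abs_nonneg z]
    have hfz := hf_nonneg z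
    have habsz := abs_nonneg z
    have e1 : ‖|z| * f z‖ = |z| * f z := by
      rw [Real.norm_eq_abs, abs_of_nonneg (by positivity)]
    have e2 : ‖(f + fun z => z ^ 2 * f z) z‖ = f z + z ^ 2 * f z := by
      simp only [Pi.add_apply, Real.norm_eq_abs]
      rw [abs_of_nonneg (by positivity)]
    rw [e1, e2]
    nlinarith
  -- transfer of integrals from Ω to ℝ with density f
  have key_eq : ∀ g : ℝ → ℝ, Measurable g → ∫ ω, g (Z ω) ∂μ = ∫ z, g z * f z := by
    intro g hg
    rw [← integral_map hZ.aemeasurable hg.aestronglyMeasurable, hdens]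
    have h1 : (fun z => ENNReal.ofReal (f z)) = (fun z => ((f z).toNNReal : ENNReal)) := rfl
    rw [h1, integral_withDensity_eq_integral_smul hf_meas.real_toNNReal g]
    congr 1
    ext z
    simp [NNReal.smul_def, Real.coe_toNNReal _ (hf_nonneg z), mul_comm]
  have key_int : ∀ g : ℝ → ℝ, Measurable g → Integrable (fun z => g z * f z) →
      Integrable (fun ω => g (Z ω)) μ := by
    intro g hg hgf
    have h1 : Integrable g (Measure.map Z μ) := by
      rw [hdens, integrable_withDensity_iff hf_meas.ennreal_ofReal
        (by filter_upwards with x using ENNReal.ofReal_lt_top)]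
      simpa [ENNReal.toReal_ofReal (hf_nonneg _)] using hgf
    exact (integrable_map_measure hg.aestronglyMeasurable hZ.aemeasurable).mp h1
  -- L as A|w| + Bw
  have hL' : ∀ w, L w = (k₁ + k₂) / 2 * |w| + (k₁ - k₂) / 2 * w := by
    intro w
    rw [hL]
    rcases le_or_gt 0 w with h | h
    · rw [if_pos h, abs_of_nonneg h]; ring
    · rw [if_neg (not_le.mpr h), abs_of_neg h]; ring
  have hLmeas : Measurable L := by
    have : L = fun z => if 0 ≤ z then k₁ * z else -k₂ * z := funext hL
    rw [this]
    exact Measurable.ite measurableSet_Ici (measurable_const.mul measurable_id)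
      (measurable_const.mul measurable_id)
  have hLbound : ∀ w, |L w| ≤ (k₁ + k₂) * |w| := by
    intro w
    rw [hL]
    rcases le_or_gt 0 w with h | h
    · rw [if_pos h, abs_of_nonneg h, abs_of_nonneg (mul_nonneg hk₁.le h)]; nlinarith
    · rw [if_neg (not_le.mpr h), abs_of_neg h, abs_of_nonneg (by nlinarith)]; nlinarith
  -- integrability of the integrands
  have hint : ∀ c : ℝ, Integrable (fun z => L (z + c) * f z) := by
    intro c
    refine Integrable.mono ((habs_int.const_mul (k₁ + k₂)).add
      (hf_int.const_mul ((k₁ + k₂) * |c|)))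
      (((hLmeas.comp (measurable_id.add_const c)).mul hf_meas).aestronglyMeasurable) ?_
    filter_upwards with z
    have h1 := hLbound (z + c)
    have h2 : |z + c| ≤ |z| + |c| := abs_add_le _ _
    have hfz := hf_nonneg z
    have e1 : ‖L (z + c) * f z‖ = |L (z + c)| * f z := by
      rw [Real.norm_eq_abs, abs_mul, abs_of_nonneg hfz]
    have e2 : ‖(k₁ + k₂) * (|z| * f z) + (k₁ + k₂) * |c| * f z‖
        = (k₁ + k₂) * (|z| * f z) + (k₁ + k₂) * |c| * f z := by
      rw [Real.norm_eq_abs, abs_of_nonneg (add_nonneg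
        (mul_nonneg (by linarith) (mul_nonneg (abs_nonneg z) hfz))
        (mul_nonneg (mul_nonneg (by linarith) (abs_nonneg c)) hfz))]
    simp only [Pi.add_apply]
    rw [e1, e2]
    have h3 : |L (z + c)| * f z ≤ ((k₁ + k₂) * (|z| + |c|)) * f z :=
      mul_le_mul_of_nonneg_right (h1.trans (mul_le_mul_of_nonneg_left h2 (by linarith))) hfz
    nlinarith [h3]
  have hmeasLc : ∀ c : ℝ, Measurable (fun z : ℝ => L (z + c)) :=
    fun c => hLmeas.comp (measurable_id.add_const c)
  have hEq : ∀ c : ℝ, ∫ ω, L (Z ω + c) ∂μ = ∫ z, L (z + c) * f z := by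
    intro c
    exact key_eq (fun z => L (z + c)) (hmeasLc c)
  constructor
  · -- convexity
    refine ⟨convex_univ, ?_⟩
    intro x _ y _ a b ha hb hab
    simp only [smul_eq_mul]
    rw [hEq x, hEq y, hEq (a * x + b * y)]
    have pt : ∀ z, L (z + (a * x + b * y)) * f z
        ≤ a * (L (z + x) * f z) + b * (L (z + y) * f z) := by
      intro z
      have hfz := hf_nonneg z
      have hconv : L (z + (a * x + b * y)) ≤ a * L (z + x) + b * L (z + y) := by
        have hz : z + (a * x + b * y) = a * (z + x) + b * (z + y) := by
          linear_combination (-z) * hab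
        rw [hz, hL', hL', hL']
        have habs : |a * (z + x) + b * (z + y)| ≤ a * |z + x| + b * |z + y| := by
          calc |a * (z + x) + b * (z + y)| ≤ |a * (z + x)| + |b * (z + y)| := abs_add_le _ _
            _ = a * |z + x| + b * |z + y| := by
                rw [abs_mul, abs_mul, abs_of_nonneg ha, abs_of_nonneg hb]
        nlinarith [mul_le_mul_of_nonneg_left habs (by linarith : (0:ℝ) ≤ (k₁ + k₂) / 2)]
      nlinarith [mul_le_mul_of_nonneg_right hconv hfz]
    have step := integral_mono (hint _) (((hint x).const_mul a).add ((hint y).const_mul b)) pt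
    simp only [Pi.add_apply] at step
    rw [integral_add ((hint x).const_mul a) ((hint y).const_mul b),
      integral_const_mul, integral_const_mul] at step
    exact step
  · -- minimizer
    intro C hC c
    rw [hEq C, hEq c]
    set s : ℝ → ℝ := fun w => if 0 ≤ w then 1 else -1 with hs
    have hs_meas : Measurable s :=
      Measurable.ite measurableSet_Ici measurable_const measurable_const
    have hs_int : Integrable (fun z => s (z + C) * f z) := by
      refine hf_int.mono
        (((hs_meas.comp (measurable_id.add_const C)).mul hf_meas).aestronglyMeasurable) ?_
      filter_upwards with z
      have hfz := hf_nonneg z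
      have : |s (z + C)| = 1 := by
        rw [hs]; by_cases h : 0 ≤ z + C <;> simp [h]
      rw [Real.norm_eq_abs, Real.norm_eq_abs, abs_mul, this, one_mul, abs_of_nonneg hfz]
    -- value of ∫ s(z+C) f
    have hIic0 : ∫ z in Set.Iic (0:ℝ), f z = 1 / 2 := by
      have h1 : ∫ z in Set.Iic (0:ℝ), f z = ∫ z in Set.Ioi (0:ℝ), f z := by
        have h2 : ∫ z in Set.Iic (0:ℝ), f z = ∫ z in Set.Iic (0:ℝ), f (-z) := by
          simp only [hf_symm]
        rw [h2, integral_comp_neg_Iic, neg_zero]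
      have h3 := intervalIntegral.integral_Iic_add_Ioi (b := (0:ℝ)) hf_int.integrableOn hf_int.integrableOn
      rw [hf_total] at h3
      linarith
    have hIic : ∀ a : ℝ, ∫ z in Set.Iic a, f z = 1 / 2 + ∫ z in (0:ℝ)..a, f z := by
      intro a
      have := intervalIntegral.integral_Iic_sub_Iic (a := (0:ℝ)) (b := a)
        hf_int.integrableOn hf_int.integrableOn
      rw [hIic0] at this
      linarith
    have hS : ∫ z, s (z + C) * f z
        = 2 * ((if 0 ≤ C then (1:ℝ) else -1) * ∫ z in (0:ℝ)..|C|, f z) := by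
      have hsplit := integral_add_compl (measurableSet_Iio (a := -C)) hs_int
      have hneg : ∫ z in Set.Iio (-C), s (z + C) * f z = -∫ z in Set.Iio (-C), f z := by
        rw [← integral_neg]
        refine setIntegral_congr_fun measurableSet_Iio (fun z hz => ?_)
        have : ¬ (0 ≤ z + C) := by simp only [Set.mem_Iio] at hz; linarith
        simp [hs, this]
      have hpos : ∫ z in (Set.Iio (-C))ᶜ, s (z + C) * f z = ∫ z in Set.Ici (-C), f z := by
        rw [Set.compl_Iio]
        refine setIntegral_congr_fun measurableSet_Ici (fun z hz => ?_)
        have : 0 ≤ z + C := by simp only [Set.mem_Ici] at hz; linarith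
        simp [hs, this]
      have htot := integral_add_compl (measurableSet_Iio (a := -C)) hf_int
      rw [Set.compl_Iio, hf_total] at htot
      have hIio_eq : ∫ z in Set.Iio (-C), f z = ∫ z in Set.Iic (-C), f z :=
        (integral_Iic_eq_integral_Iio).symm
      -- ∫_0^{-C} f = - ∫_0^C f by symmetry
      have hsym : ∫ z in (0:ℝ)..(-C), f z = -∫ z in (0:ℝ)..C, f z := by
        have h2 : ∫ z in (0:ℝ)..C, f z = ∫ z in (0:ℝ)..C, f (-z) := by
          simp only [hf_symm]
        rw [h2, intervalIntegral.integral_comp_neg, neg_zero,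
          intervalIntegral.integral_symm]
      have habsC : ∫ z in (0:ℝ)..C, f z
          = (if 0 ≤ C then (1:ℝ) else -1) * ∫ z in (0:ℝ)..|C|, f z := by
        by_cases h : 0 ≤ C
        · rw [if_pos h, abs_of_nonneg h, one_mul]
        · rw [if_neg h, abs_of_neg (lt_of_not_ge h)]
          have := hsym
          linarith
      have h1 := hIic (-C)
      rw [hneg, hpos] at hsplit
      rw [hIio_eq, h1, hsym] at hsplit
      rw [hIio_eq, h1, hsym] at htot
      rw [← hsplit, ← habsC]
      linarith
    -- pointwise subgradient inequality
    have pt : ∀ z, L (z + C) * f z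
        + ((c - C) * ((k₁ + k₂) / 2) * (s (z + C) * f z)
          + (c - C) * ((k₁ - k₂) / 2) * f z)
        ≤ L (z + c) * f z := by
      intro z
      have hfz := hf_nonneg z
      have habs : |z + C| + s (z + C) * ((z + c) - (z + C)) ≤ |z + c| := by
        by_cases h : 0 ≤ z + C
        · have h1 := le_abs_self (z + c)
          rw [hs]; simp only [if_pos h]
          rw [abs_of_nonneg h]; linarith
        · have h1 := neg_abs_le (z + c)
          rw [hs]; simp only [if_neg h]
          rw [abs_of_neg (lt_of_not_ge h)]; linarith
      have key : L (z + C) + (c - C) * ((k₁ + k₂) / 2 * s (z + C) + (k₁ - k₂) / 2)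
          ≤ L (z + c) := by
        rw [hL', hL']
        nlinarith [mul_le_mul_of_nonneg_left habs (by linarith : (0:ℝ) ≤ (k₁ + k₂) / 2)]
      nlinarith [mul_le_mul_of_nonneg_right key hfz]
    have hint2 : Integrable (fun z =>
        (c - C) * ((k₁ + k₂) / 2) * (s (z + C) * f z)
          + (c - C) * ((k₁ - k₂) / 2) * f z) :=
      (hs_int.const_mul _).add (hf_int.const_mul _)
    have hmono := integral_mono ((hint C).add hint2) (hint c) pt
    simp only [Pi.add_apply] at hmono
    rw [integral_add (hint C) hint2, integral_add (hs_int.const_mul _) (hf_int.const_mul _),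
      integral_const_mul, integral_const_mul, hS, hf_total] at hmono
    -- the first-order term vanishes by hC
    have hzero : (c - C) * ((k₁ + k₂) / 2)
          * (2 * ((if 0 ≤ C then (1:ℝ) else -1) * ∫ z in (0:ℝ)..|C|, f z))
        + (c - C) * ((k₁ - k₂) / 2) * 1 = 0 := by
      by_cases h : 0 ≤ C
      · rw [if_pos h] at hC ⊢; linear_combination (c - C) * hC
      · rw [if_neg h] at hC ⊢; linear_combination (c - C) * hC
    linarith
end

section
/- Let C be a real number satisfying (k₁ − k₂)/2 + sgn(C)(k₁ + k₂) ∫₀^{|C|} f(z) dz = 0, where sgn(c) = 1 for c ≥ 0 and sgn(c) = −1 for c < 0. Then E[L(Z + C)] = (k₁ + k₂) ∫_{|C|}^∞ z f(z) dz. -/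
open MeasureTheory ProbabilityTheory Set
open scoped NNReal ENNReal

/-- If `C` satisfies `(k₁ − k₂)/2 + sgn(C)(k₁ + k₂) ∫₀^{|C|} f = 0`, then
`E[L(Z + C)] = (k₁ + k₂) ∫_{|C|}^∞ z f(z) dz`. -/
theorem expectation_loss_at_minimizer
    {Ω : Type*} [MeasurableSpace Ω] (μ : Measure Ω) [IsProbabilityMeasure μ]
    (f : ℝ → ℝ) (hf_meas : Measurable f) (hf_nonneg : ∀ x, 0 ≤ f x)
    (hf_total : ∫ z, f z = 1)
    (hf_symm : ∀ x, f (-x) = f x)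
    (hf_mono : ∀ x y : ℝ, 0 ≤ x → x ≤ y → f y ≤ f x)
    (Z : Ω → ℝ) (hZ : Measurable Z)
    (hdens : Measure.map Z μ = volume.withDensity (fun z => ENNReal.ofReal (f z)))
    (hmom : Integrable (fun z => z ^ 2 * f z))
    (k₁ k₂ : ℝ) (hk₁ : 0 < k₁) (hk₂ : 0 < k₂)
    (L : ℝ → ℝ) (hL : ∀ z, L z = if 0 ≤ z then k₁ * z else -k₂ * z)
    (C : ℝ)
    (hC : (k₁ - k₂) / 2
        + (if 0 ≤ C then (1:ℝ) else -1) * (k₁ + k₂) * (∫ z in (0:ℝ)..|C|, f z) = 0) :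
    (∫ ω, L (Z ω + C) ∂μ) = (k₁ + k₂) * (∫ z in Set.Ioi |C|, z * f z) := by
  have hDnn : (0:ℝ) ≤ |C| := abs_nonneg C
  have hLeq : L = fun z => if 0 ≤ z then k₁ * z else -k₂ * z := funext hL
  have hLmeas : Measurable L := by
    rw [hLeq]
    exact Measurable.ite measurableSet_Ici (measurable_const.mul measurable_id)
      (measurable_const.mul measurable_id)
  -- the density integrates to 1 in the lintegral sense
  have hprob : IsProbabilityMeasure (volume.withDensity fun z => ENNReal.ofReal (f z)) := by
    rw [← hdens]; exact Measure.isProbabilityMeasure_map hZ.aemeasurable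
  have htot : (∫⁻ z, ENNReal.ofReal (f z)) = 1 := by
    have h := hprob.measure_univ
    rwa [withDensity_apply _ MeasurableSet.univ, setLIntegral_univ] at h
  have hf_int : Integrable f := by
    refine ⟨hf_meas.aestronglyMeasurable, ?_⟩
    rw [hasFiniteIntegral_iff_ofReal (Filter.Eventually.of_forall hf_nonneg), htot]
    exact ENNReal.one_lt_top
  have hzf : Integrable (fun z => z * f z) := by
    refine (hmom.add hf_int).mono ((measurable_id.mul hf_meas).aestronglyMeasurable) ?_
    filter_upwards with z
    have h1 : 0 ≤ f z := hf_nonneg z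
    have h2 : |z| ≤ z ^ 2 + 1 := by nlinarith [abs_nonneg z, sq_abs z]
    have h3 : |z * f z| = |z| * f z := by rw [abs_mul, abs_of_nonneg h1]
    have h4 : z ^ 2 * f z + f z = |z ^ 2 * f z + f z| := by
      rw [abs_of_nonneg (by positivity)]
    simp only [Real.norm_eq_abs, Pi.add_apply]
    rw [h3, ← h4]
    nlinarith
  -- integrability of the main integrand
  have hLbound : ∀ w : ℝ, |L w| ≤ (k₁ + k₂) * |w| := by
    intro w
    rw [hL]
    split_ifs with h
    · rw [abs_of_nonneg (mul_nonneg hk₁.le h), abs_of_nonneg h]; nlinarith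
    · push_neg at h
      rw [abs_of_nonneg (by nlinarith), abs_of_neg h]; nlinarith
  have hmain : Integrable (fun z => L (z + C) * f z) := by
    have hg : Integrable (fun z => (k₁ + k₂) * (|C| * f z) + (k₁ + k₂) * |z * f z|) :=
      ((hf_int.const_mul |C|).const_mul _).add ((hzf.abs).const_mul _)
    refine hg.mono (((hLmeas.comp (measurable_add_const C)).mul hf_meas).aestronglyMeasurable) ?_
    filter_upwards with z
    have h1 : 0 ≤ f z := hf_nonneg z
    have h2 : |L (z + C)| ≤ (k₁ + k₂) * (|z| + |C|) := by
      refine le_trans (hLbound (z + C)) ?_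
      have := abs_add_le z C
      nlinarith
    have h3 : |z * f z| = |z| * f z := by rw [abs_mul, abs_of_nonneg h1]
    have h4 : |L (z + C) * f z| = |L (z + C)| * f z := by rw [abs_mul, abs_of_nonneg h1]
    have habs : abs ((k₁ + k₂) * (|C| * f z) + (k₁ + k₂) * |z * f z|)
        = (k₁ + k₂) * (|C| * f z) + (k₁ + k₂) * |z * f z| := by
      rw [abs_of_nonneg (by positivity)]
    simp only [Real.norm_eq_abs]
    rw [habs, h4, h3]
    nlinarith [abs_nonneg (L (z + C))]
  -- reduce to an integral against the density
  have key : (∫ ω, L (Z ω + C) ∂μ) = ∫ z, L (z + C) * f z := by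
    have h1 : (∫ ω, L (Z ω + C) ∂μ) = ∫ z, L (z + C) ∂(Measure.map Z μ) :=
      (integral_map hZ.aemeasurable
        ((hLmeas.comp (measurable_add_const C)).aestronglyMeasurable)).symm
    rw [h1, hdens,
      show (fun z => ENNReal.ofReal (f z)) = (fun z => ((Real.toNNReal (f z) : ℝ≥0) : ℝ≥0∞))
        from rfl,
      integral_withDensity_eq_integral_smul hf_meas.real_toNNReal]
    congr 1
    funext z
    simp [NNReal.smul_def, Real.coe_toNNReal _ (hf_nonneg z), mul_comm]
  -- reflection identities
  have refl_f : ∀ a : ℝ, (∫ z in Iic (-a), f z) = ∫ z in Ioi a, f z := by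
    intro a
    rw [← integral_comp_neg_Ioi]
    simp_rw [hf_symm]
  have refl_zf : ∀ a : ℝ, (∫ z in Iic (-a), z * f z) = -∫ z in Ioi a, z * f z := by
    intro a
    rw [← integral_comp_neg_Ioi, ← integral_neg]
    refine setIntegral_congr_fun measurableSet_Ioi fun x _ => ?_
    rw [hf_symm]; ring
  have split_f : ∀ a : ℝ, (∫ z in Iic a, f z) + (∫ z in Ioi a, f z) = 1 := by
    intro a
    rw [intervalIntegral.integral_Iic_add_Ioi hf_int.integrableOn hf_int.integrableOn, hf_total]
  have half : (∫ z in Ioi (0:ℝ), f z) = 1 / 2 := by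
    have h0 : (∫ z in Iic (0:ℝ), f z) = ∫ z in Ioi (0:ℝ), f z := by
      have := refl_f 0; rwa [neg_zero] at this
    have := split_f 0
    linarith
  have Ineg : ∀ a : ℝ, (∫ z in Ioi (-a), f z) = 1 - ∫ z in Ioi a, f z := by
    intro a
    have h := split_f (-a)
    rw [refl_f] at h
    linarith
  have split_zf : ∀ a : ℝ, (∫ z in Iic a, z * f z) + (∫ z in Ioi a, z * f z) = ∫ z, z * f z :=
    fun a => intervalIntegral.integral_Iic_add_Ioi hzf.integrableOn hzf.integrableOn
  have Jtot0 : (∫ z, z * f z) = 0 := by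
    have h := split_zf 0
    have h0 := refl_zf 0
    rw [neg_zero] at h0
    linarith
  have Jneg : ∀ a : ℝ, (∫ z in Ioi (-a), z * f z) = ∫ z in Ioi a, z * f z := by
    intro a
    have h := split_zf (-a)
    rw [refl_zf] at h
    linarith [Jtot0]
  -- the interval integral in terms of a tail integral
  have hI0 : (∫ z in (0:ℝ)..|C|, f z) = 1 / 2 - ∫ z in Ioi |C|, f z := by
    rw [intervalIntegral.integral_of_le hDnn]
    have hu := setIntegral_union (μ := volume) (f := f) (s := Ioc (0:ℝ) |C|) (t := Ioi |C|)
      Ioc_disjoint_Ioi_same measurableSet_Ioi hf_int.integrableOn hf_int.integrableOn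
    rw [Ioc_union_Ioi_eq_Ioi hDnn, half] at hu
    linarith
  -- split the main integral at -C
  have hsplit : (∫ z, L (z + C) * f z) =
      (∫ z in Iic (-C), L (z + C) * f z) + ∫ z in Ioi (-C), L (z + C) * f z :=
    (intervalIntegral.integral_Iic_add_Ioi hmain.integrableOn hmain.integrableOn).symm
  have hIic : (∫ z in Iic (-C), L (z + C) * f z)
      = -k₂ * (∫ z in Iic (-C), z * f z) + (-k₂ * C) * (∫ z in Iic (-C), f z) := by
    rw [setIntegral_congr_fun (g := fun z => -k₂ * (z * f z) + (-k₂ * C) * f z)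
        measurableSet_Iic ?_,
      integral_add ((hzf.integrableOn).const_mul _) ((hf_int.integrableOn).const_mul _),
      integral_const_mul, integral_const_mul]
    intro z hz
    have hz' : z + C ≤ 0 := by simp only [mem_Iic] at hz; linarith
    show L (z + C) * f z = -k₂ * (z * f z) + -k₂ * C * f z
    rw [hL]
    split_ifs with h
    · have hzc : z = -C := by linarith
      subst hzc; ring
    · ring
  have hIoi : (∫ z in Ioi (-C), L (z + C) * f z)
      = k₁ * (∫ z in Ioi (-C), z * f z) + (k₁ * C) * (∫ z in Ioi (-C), f z) := by
    rw [setIntegral_congr_fun (g := fun z => k₁ * (z * f z) + (k₁ * C) * f z)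
        measurableSet_Ioi ?_,
      integral_add ((hzf.integrableOn).const_mul _) ((hf_int.integrableOn).const_mul _),
      integral_const_mul, integral_const_mul]
    intro z hz
    have hz' : 0 ≤ z + C := by simp only [mem_Ioi] at hz; linarith
    show L (z + C) * f z = k₁ * (z * f z) + k₁ * C * f z
    rw [hL, if_pos hz']
    ring
  -- the key consequence of hC: (k₁+k₂) ∫_{Ioi C} f = k₁
  have hkey : (k₁ + k₂) * (∫ z in Ioi C, f z) = k₁ := by
    by_cases h : 0 ≤ C
    · rw [if_pos h] at hC
      rw [hI0, abs_of_nonneg h] at hC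
      linarith
    · rw [if_neg h] at hC
      push_neg at h
      rw [hI0, abs_of_neg h, Ineg C] at hC
      linarith
  have hJabs : (∫ z in Ioi |C|, z * f z) = ∫ z in Ioi C, z * f z := by
    by_cases h : 0 ≤ C
    · rw [abs_of_nonneg h]
    · push_neg at h
      rw [abs_of_neg h, Jneg]
  rw [key, hsplit, hIic, hIoi, refl_zf C, refl_f C, Jneg C, Ineg C, hJabs]
  linear_combination -C * hkey
end
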